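/- arXiv:1702.05141 — 6 statements merged into one kernel-verified Lean document; each statement's English description precedes it below -/
import Mathlib

section
/- Let X be a finite set with |X| ≥ 2 and let δ be a dissimilarity map on X. Then there exists a nonempty finite set V of ultrametrics on X such that the set of all ultrametrics that are l∞-nearest to δ is exactly the tropical convex hull tconv(V); in particular, the set of ultrametrics l∞-nearest to δ is a nonempty tropical polytope. -/
/-- A dissimilarity map on `X`: symmetric with zero diagonal
(equivalently, a real number attached to each 2-element subset of `X`). -/
def IsDissim {X : Type*} (d : X → X → ℝ) : Prop :=
  (∀ x, d x x = 0) ∧ (∀ x y, d x y = d y x)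

/-- An ultrametric: a dissimilarity map such that for all pairwise distinct `x,y,z`,
the maximum of the three pairwise values is attained at least twice. -/
def IsUltra {X : Type*} (d : X → X → ℝ) : Prop :=
  IsDissim d ∧ ∀ x y z : X, x ≠ y → x ≠ z → y ≠ z →
    ((d x y = d x z ∧ d y z ≤ d x y) ∨ (d x y = d y z ∧ d x z ≤ d x y) ∨
      (d x z = d y z ∧ d x y ≤ d x z))

/-- The `l∞`-distance between two dissimilarity maps: the maximum of
`|d₁{x,y} - d₂{x,y}|` over 2-element subsets `{x,y}`. -/
noncomputable def dinf {X : Type*} (d₁ d₂ : X → X → ℝ) : ℝ :=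
  sSup {r | ∃ x y : X, x ≠ y ∧ r = |d₁ x y - d₂ x y|}

/-- `u` is an ultrametric that is `l∞`-nearest to `δ`. -/
def NearestUltra {X : Type*} (δ u : X → X → ℝ) : Prop :=
  IsUltra u ∧ ∀ u', IsUltra u' → dinf δ u ≤ dinf δ u'

/-- The tropical convex hull of a nonempty finite set of points. -/
def tconv {X : Type*} (V : Finset (X → X → ℝ)) (hV : V.Nonempty) : Set (X → X → ℝ) :=
  {d | ∃ lam : (X → X → ℝ) → ℝ, V.sup' hV lam = 0 ∧
    ∀ x y : X, d x y = V.sup' hV (fun v => lam v + v x y)}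


/-!
Let `G` be the subdominant ultrametric of `δ` (the largest ultrametric below it) and
`2t = ‖δ - G‖∞`. An ultrametric `u` with `‖δ - u‖∞ = e` satisfies `u - e ≤ G`, which forces
`e ≥ t`. Hence the nearest ultrametrics are exactly the ultrametrics `u` with
`δ - t ≤ u ≤ G + t`, and they all agree on a pair where `δ - G = 2t`.

Such a box of ultrametrics is the tropical convex hull of its finitely many points with
coordinates in the finite set `Γ` of the bounds' values. Monotone maps applied off the diagonal
preserve ultrametrics, so rounding `u` down to `Γ`, but never below the least point of `Γ` above
`u a b`, gives such a point `w` for which `u - w` is minimal at `(a, b)`; these `w` generate `u`.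
-/

section

variable {X : Type*}

lemma isUltra_iff_le_max (d : X → X → ℝ) :
    IsUltra d ↔ IsDissim d ∧ ∀ x y z : X, x ≠ y → x ≠ z → y ≠ z →
      d x y ≤ max (d x z) (d y z) := by
  constructor
  · rintro ⟨hd, h⟩
    refine ⟨hd, fun x y z hxy hxz hyz => ?_⟩
    rcases h x y z hxy hxz hyz with ⟨h1, _⟩ | ⟨h1, _⟩ | ⟨_, h2⟩
    · exact h1 ▸ le_max_left _ _
    · exact h1 ▸ le_max_right _ _
    · exact h2.trans (le_max_left _ _)
  · rintro ⟨hd, h⟩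
    refine ⟨hd, fun x y z hxy hxz hyz => ?_⟩
    have A := le_max_iff.mp (h x y z hxy hxz hyz)
    have B := le_max_iff.mp (h x z y hxz hxy hyz.symm)
    have C := le_max_iff.mp (h y z x hyz hxy.symm hxz.symm)
    rw [hd.2 z y] at B
    rw [hd.2 y x, hd.2 z x] at C
    rcases A with h1 | h1 <;> rcases B with h2 | h2 <;> rcases C with h3 | h3 <;>
      first
        | exact Or.inl ⟨by linarith, by linarith⟩
        | exact Or.inr (Or.inl ⟨by linarith, by linarith⟩)
        | exact Or.inr (Or.inr ⟨by linarith, by linarith⟩)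

def mapOffDiag [DecidableEq X] (φ : ℝ → ℝ) (d : X → X → ℝ) : X → X → ℝ :=
  fun x y => if x = y then 0 else φ (d x y)

@[simp]
lemma mapOffDiag_self [DecidableEq X] (φ : ℝ → ℝ) (d : X → X → ℝ) (x : X) :
    mapOffDiag φ d x x = 0 := if_pos rfl

lemma mapOffDiag_of_ne [DecidableEq X] (φ : ℝ → ℝ) (d : X → X → ℝ) {x y : X} (h : x ≠ y) :
    mapOffDiag φ d x y = φ (d x y) := if_neg h

lemma IsUltra.mapOffDiag [DecidableEq X] {u : X → X → ℝ} (hu : IsUltra u) {φ : ℝ → ℝ}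
    {s : Set ℝ} (hφ : MonotoneOn φ s) (hs : ∀ x y, x ≠ y → u x y ∈ s) :
    IsUltra (_root_.mapOffDiag φ u) := by
  rw [isUltra_iff_le_max] at hu ⊢
  refine ⟨⟨mapOffDiag_self φ u, fun x y => ?_⟩, fun x y z hxy hxz hyz => ?_⟩
  · by_cases h : x = y
    · rw [h]
    · rw [mapOffDiag_of_ne φ u h, mapOffDiag_of_ne φ u (Ne.symm h), hu.1.2]
  · rw [mapOffDiag_of_ne φ u hxy, mapOffDiag_of_ne φ u hxz, mapOffDiag_of_ne φ u hyz,
      ← hφ.map_max (hs x z hxz) (hs y z hyz)]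
    have hmax : max (u x z) (u y z) ∈ s := by
      rcases max_choice (u x z) (u y z) with h | h <;> rw [h]
      exacts [hs x z hxz, hs y z hyz]
    exact hφ (hs x y hxy) hmax (hu.2 x y z hxy hxz hyz)

lemma IsUltra.mapOffDiag_add [DecidableEq X] {u : X → X → ℝ} (hu : IsUltra u) (c : ℝ) :
    IsUltra (_root_.mapOffDiag (· + c) u) :=
  hu.mapOffDiag (s := Set.univ) ((monotone_id.add_const c).monotoneOn _) fun _ _ _ => trivial

lemma isUltra_zero : IsUltra (0 : X → X → ℝ) :=
  ⟨⟨fun _ => rfl, fun _ _ => rfl⟩, fun _ _ _ _ _ _ => Or.inl ⟨rfl, le_rfl⟩⟩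

lemma finite_dinf_values [Finite X] (d₁ d₂ : X → X → ℝ) :
    {r | ∃ x y : X, x ≠ y ∧ r = |d₁ x y - d₂ x y|}.Finite := by
  refine (Set.finite_range fun z : X × X => |d₁ z.1 z.2 - d₂ z.1 z.2|).subset ?_
  rintro _ ⟨a, b, -, rfl⟩
  exact ⟨(a, b), rfl⟩

lemma abs_sub_le_dinf [Finite X] (d₁ d₂ : X → X → ℝ) {x y : X} (hxy : x ≠ y) :
    |d₁ x y - d₂ x y| ≤ dinf d₁ d₂ :=
  le_csSup (finite_dinf_values d₁ d₂).bddAbove ⟨x, y, hxy, rfl⟩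

lemma dinf_le_iff [Finite X] [Nontrivial X] {d₁ d₂ : X → X → ℝ} {r : ℝ} :
    dinf d₁ d₂ ≤ r ↔ ∀ x y, x ≠ y → |d₁ x y - d₂ x y| ≤ r := by
  refine ⟨fun h x y hxy => (abs_sub_le_dinf d₁ d₂ hxy).trans h, fun h => ?_⟩
  obtain ⟨x, y, hxy⟩ := exists_pair_ne X
  refine csSup_le ⟨_, x, y, hxy, rfl⟩ ?_
  rintro _ ⟨a, b, hab, rfl⟩
  exact h a b hab

lemma exists_abs_sub_eq_dinf [Finite X] [Nontrivial X] (d₁ d₂ : X → X → ℝ) :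
    ∃ x y, x ≠ y ∧ |d₁ x y - d₂ x y| = dinf d₁ d₂ := by
  obtain ⟨x, y, hxy⟩ := exists_pair_ne X
  obtain ⟨a, b, hab, h⟩ :=
    Set.Nonempty.csSup_mem (s := {r | ∃ x y : X, x ≠ y ∧ r = |d₁ x y - d₂ x y|})
      ⟨_, x, y, hxy, rfl⟩ (finite_dinf_values d₁ d₂)
  exact ⟨a, b, hab, h.symm⟩

def ultrasBelow (δ : X → X → ℝ) : Set (X → X → ℝ) :=
  {u | IsUltra u ∧ ∀ x y, x ≠ y → u x y ≤ δ x y}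

noncomputable def subdominant [DecidableEq X] (δ : X → X → ℝ) : X → X → ℝ :=
  fun x y => if x = y then 0 else sSup ((fun u => u x y) '' ultrasBelow δ)

lemma ultrasBelow_nonempty [Finite X] [DecidableEq X] (δ : X → X → ℝ) :
    (ultrasBelow δ).Nonempty := by
  obtain ⟨c, hc⟩ := (Set.finite_range fun z : X × X => δ z.1 z.2).bddBelow
  refine ⟨mapOffDiag (· + c) 0, isUltra_zero.mapOffDiag_add c, fun x y hxy => ?_⟩
  rw [mapOffDiag_of_ne _ _ hxy, Pi.zero_apply, Pi.zero_apply, zero_add]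
  exact hc ⟨(x, y), rfl⟩

lemma le_subdominant [DecidableEq X] {δ u : X → X → ℝ} (hu : u ∈ ultrasBelow δ) {x y : X}
    (hxy : x ≠ y) : u x y ≤ subdominant δ x y := by
  rw [subdominant, if_neg hxy]
  refine le_csSup ⟨δ x y, ?_⟩ ⟨u, hu, rfl⟩
  rintro _ ⟨v, hv, rfl⟩
  exact hv.2 x y hxy

lemma subdominant_le [Finite X] [DecidableEq X] (δ : X → X → ℝ) {x y : X} (hxy : x ≠ y) :
    subdominant δ x y ≤ δ x y := by
  rw [subdominant, if_neg hxy]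
  refine csSup_le ((ultrasBelow_nonempty δ).image _) ?_
  rintro _ ⟨v, hv, rfl⟩
  exact hv.2 x y hxy

lemma isUltra_subdominant [Finite X] [DecidableEq X] (δ : X → X → ℝ) :
    IsUltra (subdominant δ) := by
  rw [isUltra_iff_le_max]
  refine ⟨⟨fun x => if_pos rfl, fun x y => ?_⟩, fun x y z hxy hxz hyz => ?_⟩
  · by_cases h : x = y
    · rw [h]
    · rw [subdominant, subdominant, if_neg h, if_neg (Ne.symm h)]
      exact congrArg sSup (Set.image_congr fun u hu => hu.1.1.2 x y)
  · conv_lhs => rw [subdominant, if_neg hxy]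
    refine csSup_le ((ultrasBelow_nonempty δ).image _) ?_
    rintro _ ⟨u, hu, rfl⟩
    exact ((isUltra_iff_le_max u).1 hu.1).2 x y z hxy hxz hyz |>.trans
      (max_le_max (le_subdominant hu hxz) (le_subdominant hu hyz))

lemma le_subdominant_add [DecidableEq X] {δ u : X → X → ℝ} (hu : IsUltra u) {r : ℝ}
    (hle : ∀ x y, x ≠ y → u x y ≤ δ x y + r) {x y : X} (hxy : x ≠ y) :
    u x y ≤ subdominant δ x y + r := by
  have hmem : mapOffDiag (· + -r) u ∈ ultrasBelow δ := by
    refine ⟨hu.mapOffDiag_add (-r), fun a b hab => ?_⟩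
    rw [mapOffDiag_of_ne _ _ hab]
    linarith [hle a b hab]
  have := le_subdominant hmem hxy
  rw [mapOffDiag_of_ne _ _ hxy] at this
  linarith

def ultraBox (L U : X → X → ℝ) : Set (X → X → ℝ) :=
  {u | IsUltra u ∧ ∀ x y, x ≠ y → L x y ≤ u x y ∧ u x y ≤ U x y}

section Nearest

variable [Finite X] [Nontrivial X] [DecidableEq X] {δ : X → X → ℝ}

lemma dinf_subdominant_le {u : X → X → ℝ} (hu : IsUltra u) :
    dinf δ (subdominant δ) ≤ 2 * dinf δ u := by
  set e := dinf δ u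
  have hclose : ∀ x y, x ≠ y → |δ x y - u x y| ≤ e := fun x y => abs_sub_le_dinf δ u
  have hle : ∀ x y, x ≠ y → u x y ≤ subdominant δ x y + e := fun x y =>
    le_subdominant_add hu fun a b hab => by linarith [abs_le.1 (hclose a b hab)]
  obtain ⟨p, q, hpq, hmax⟩ := exists_abs_sub_eq_dinf δ (subdominant δ)
  rw [← hmax, abs_of_nonneg (sub_nonneg.2 (subdominant_le δ hpq))]
  linarith [abs_le.1 (hclose p q hpq), hle p q hpq]

lemma dinf_mapOffDiag_subdominant_le :
    dinf δ (mapOffDiag (· + dinf δ (subdominant δ) / 2) (subdominant δ)) ≤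
      dinf δ (subdominant δ) / 2 := by
  refine dinf_le_iff.2 fun x y hxy => ?_
  rw [mapOffDiag_of_ne _ _ hxy, abs_le]
  have := abs_sub_le_dinf δ (subdominant δ) hxy
  rw [abs_of_nonneg (sub_nonneg.2 (subdominant_le δ hxy))] at this
  constructor <;> linarith [subdominant_le δ hxy]

lemma nearestUltra_iff_dinf_le {u : X → X → ℝ} :
    NearestUltra δ u ↔ IsUltra u ∧ dinf δ u ≤ dinf δ (subdominant δ) / 2 := by
  have hM := (isUltra_subdominant δ).mapOffDiag_add (dinf δ (subdominant δ) / 2)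
  refine ⟨fun h => ⟨h.1, (h.2 _ hM).trans dinf_mapOffDiag_subdominant_le⟩, fun h => ?_⟩
  exact ⟨h.1, fun u' hu' => h.2.trans (by linarith [dinf_subdominant_le (δ := δ) hu'])⟩

lemma nearestUltra_iff_mem_ultraBox {u : X → X → ℝ} :
    NearestUltra δ u ↔ u ∈ ultraBox (fun x y => δ x y - dinf δ (subdominant δ) / 2)
      (mapOffDiag (· + dinf δ (subdominant δ) / 2) (subdominant δ)) := by
  rw [nearestUltra_iff_dinf_le, dinf_le_iff]
  simp only [ultraBox, Set.mem_ofPred_eq]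
  constructor
  · rintro ⟨hu, hclose⟩
    refine ⟨hu, fun x y hxy => ⟨by linarith [abs_le.1 (hclose x y hxy)], ?_⟩⟩
    rw [mapOffDiag_of_ne _ _ hxy]
    exact le_subdominant_add hu (fun a b hab => by linarith [abs_le.1 (hclose a b hab)]) hxy
  · rintro ⟨hu, hbox⟩
    refine ⟨hu, fun x y hxy => abs_le.2 ?_⟩
    have hupper := (hbox x y hxy).2
    rw [mapOffDiag_of_ne _ _ hxy] at hupper
    constructor <;> linarith [(hbox x y hxy).1, subdominant_le δ hxy]

end Nearest

lemma isUltra_of_mem_tconv {V : Finset (X → X → ℝ)} {hV : V.Nonempty} (hVu : ∀ v ∈ V, IsUltra v)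
    {d : X → X → ℝ} (hd : d ∈ tconv V hV) : IsUltra d := by
  obtain ⟨lam, hlam, hd⟩ := hd
  rw [isUltra_iff_le_max]
  refine ⟨⟨fun x => ?_, fun x y => ?_⟩, fun x y z hxy hxz hyz => ?_⟩
  · rw [hd, ← hlam]
    exact Finset.sup'_congr hV rfl fun v hv => by rw [(hVu v hv).1.1 x, add_zero]
  · rw [hd, hd y x]
    exact Finset.sup'_congr hV rfl fun v hv => by rw [(hVu v hv).1.2 x y]
  · rw [hd x y, hd x z, hd y z]
    refine Finset.sup'_le _ _ fun v hv => ?_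
    rcases le_max_iff.1 (((isUltra_iff_le_max v).1 (hVu v hv)).2 x y z hxy hxz hyz) with h | h
    · exact le_max_of_le_left (Finset.le_sup'_of_le _ hv (by linarith))
    · exact le_max_of_le_right (Finset.le_sup'_of_le _ hv (by linarith))

lemma tconv_subset_ultraBox {L U : X → X → ℝ} {V : Finset (X → X → ℝ)} (hV : V.Nonempty)
    (hVbox : ∀ v ∈ V, v ∈ ultraBox L U) : tconv V hV ⊆ ultraBox L U := by
  intro d hd
  refine ⟨isUltra_of_mem_tconv (fun v hv => (hVbox v hv).1) hd, fun x y hxy => ?_⟩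
  obtain ⟨lam, hlam, hd⟩ := hd
  obtain ⟨v₀, hv₀, hlam₀⟩ := V.exists_mem_eq_sup' hV lam
  rw [hd]
  constructor
  · refine Finset.le_sup'_of_le _ hv₀ ?_
    linarith [(hVbox v₀ hv₀).2 x y hxy]
  · refine Finset.sup'_le _ _ fun v hv => ?_
    linarith [(hVbox v hv).2 x y hxy, hlam ▸ Finset.le_sup' lam hv]

lemma mem_tconv_of_witnesses [Finite X] {V : Finset (X → X → ℝ)} (hV : V.Nonempty)
    {u : X → X → ℝ} {p q : X} (hcommon : ∀ v ∈ V, v p q = u p q)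
    (hwit : ∀ x y, ∃ w ∈ V, ∀ x' y', w x' y' - w x y ≤ u x' y' - u x y) :
    u ∈ tconv V hV := by
  -- `lam v` is the largest `λ` with `λ + v ≤ u`; the common coordinate forces `max lam = 0`.
  set lam : (X → X → ℝ) → ℝ := fun v => ⨅ z : X × X, u z.1 z.2 - v z.1 z.2
  have hlam_le : ∀ v x y, lam v ≤ u x y - v x y := fun v x y =>
    ciInf_le (Set.finite_range fun z : X × X => u z.1 z.2 - v z.1 z.2).bddBelow (x, y)
  have hlam_eq : ∀ x y, ∃ w ∈ V, lam w = u x y - w x y := by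
    intro x y
    obtain ⟨w, hw, hslope⟩ := hwit x y
    have : Nonempty (X × X) := ⟨(x, y)⟩
    exact ⟨w, hw, le_antisymm (hlam_le w x y) (le_ciInf fun z => by linarith [hslope z.1 z.2])⟩
  refine ⟨lam, le_antisymm (Finset.sup'_le _ _ fun v hv => ?_) ?_, fun x y => le_antisymm ?_ ?_⟩
  · linarith [hlam_le v p q, hcommon v hv]
  · obtain ⟨w, hw, hlw⟩ := hlam_eq p q
    exact Finset.le_sup'_of_le _ hw (by linarith [hcommon w hw])
  · obtain ⟨w, hw, hlw⟩ := hlam_eq x y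
    exact Finset.le_sup'_of_le _ hw (by linarith)
  · exact Finset.sup'_le _ _ fun v _ => by linarith [hlam_le v x y]

section Grid

/-- The largest element of `Γ` that is at most `x` (junk value `0` if there is none). -/
noncomputable def floorIn (Γ : Finset ℝ) (x : ℝ) : ℝ :=
  if h : (Γ.filter (· ≤ x)).Nonempty then (Γ.filter (· ≤ x)).max' h else 0

variable {Γ : Finset ℝ}

lemma floorIn_spec {x γ : ℝ} (hγ : γ ∈ Γ) (hγx : γ ≤ x) :
    floorIn Γ x ∈ Γ ∧ floorIn Γ x ≤ x ∧ γ ≤ floorIn Γ x := by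
  have hne : (Γ.filter (· ≤ x)).Nonempty := ⟨γ, Finset.mem_filter.2 ⟨hγ, hγx⟩⟩
  rw [floorIn, dif_pos hne]
  obtain ⟨hmem, hle⟩ := Finset.mem_filter.1 (Finset.max'_mem _ hne)
  exact ⟨hmem, hle, Finset.le_max' _ γ (Finset.mem_filter.2 ⟨hγ, hγx⟩)⟩

lemma floorIn_monotoneOn : MonotoneOn (floorIn Γ) {x | ∃ γ ∈ Γ, γ ≤ x} := by
  rintro x ⟨γ, hγ, hγx⟩ y - hxy
  have hx : (Γ.filter (· ≤ x)).Nonempty := ⟨γ, Finset.mem_filter.2 ⟨hγ, hγx⟩⟩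
  have hy : (Γ.filter (· ≤ y)).Nonempty := ⟨γ, Finset.mem_filter.2 ⟨hγ, hγx.trans hxy⟩⟩
  rw [floorIn, floorIn, dif_pos hx, dif_pos hy]
  exact Finset.max'_subset hx (Finset.monotone_filter_right _ fun _ _ h => h.trans hxy)

noncomputable def snap (Γ : Finset ℝ) (c d v : ℝ) : ℝ :=
  if v < c then floorIn Γ v else max d (floorIn Γ v)

lemma snap_monotoneOn (c d : ℝ) : MonotoneOn (snap Γ c d) {v | ∃ γ ∈ Γ, γ ≤ v} := by
  intro v₁ h₁ v₂ h₂ h12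
  have hmono := floorIn_monotoneOn h₁ h₂ h12
  unfold snap
  split_ifs with hv₁ hv₂ hv₂
  · exact hmono
  · exact le_max_of_le_right hmono
  · exact absurd (h12.trans_lt hv₂) hv₁
  · exact max_le_max le_rfl hmono

variable {c d v γ : ℝ}

lemma snap_mem (hd : d ∈ Γ) (hγ : γ ∈ Γ) (hγv : γ ≤ v) : snap Γ c d v ∈ Γ := by
  have hfl := (floorIn_spec hγ hγv).1
  unfold snap
  split_ifs
  · exact hfl
  · rcases max_choice d (floorIn Γ v) with h | h <;> rw [h]
    exacts [hd, hfl]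

lemma le_snap (hγ : γ ∈ Γ) (hγv : γ ≤ v) : γ ≤ snap Γ c d v := by
  have hfl := (floorIn_spec hγ hγv).2.2
  unfold snap
  split_ifs
  exacts [hfl, le_max_of_le_right hfl]

lemma snap_le {γ' : ℝ} (hd : ∀ γ ∈ Γ, c ≤ γ → d ≤ γ) (hγ : γ ∈ Γ) (hγv : γ ≤ v) (hγ' : γ' ∈ Γ)
    (hvγ' : v ≤ γ') : snap Γ c d v ≤ γ' := by
  have hfl := (floorIn_spec hγ hγv).2.1
  unfold snap
  split_ifs with hlt
  exacts [hfl.trans hvγ', max_le (hd γ' hγ' ((not_lt.1 hlt).trans hvγ')) (hfl.trans hvγ')]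

lemma snap_self (hcd : c ≤ d) (hγ : γ ∈ Γ) (hγc : γ ≤ c) : snap Γ c d c = d := by
  rw [snap, if_neg (lt_irrefl c)]
  exact max_eq_left ((floorIn_spec hγ hγc).2.1.trans hcd)

lemma snap_sub_le (hcd : c ≤ d) (hγ : γ ∈ Γ) (hγv : γ ≤ v) : snap Γ c d v - d ≤ v - c := by
  have hfl := (floorIn_spec hγ hγv).2.1
  unfold snap
  split_ifs with hlt
  · linarith
  · have : max d (floorIn Γ v) ≤ d + (v - c) := max_le (by linarith [not_lt.1 hlt]) (by linarith)
    linarith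

lemma exists_witness_mem_ultraBox [DecidableEq X] {L U u : X → X → ℝ}
    (hLΓ : ∀ x y, x ≠ y → L x y ∈ Γ) (hUΓ : ∀ x y, x ≠ y → U x y ∈ Γ) (h0 : (0 : ℝ) ∈ Γ)
    (hu : u ∈ ultraBox L U) {a b : X} (hab : a ≠ b) :
    ∃ w ∈ ultraBox L U, (∀ x y, w x y ∈ Γ) ∧ ∀ x y, w x y - w a b ≤ u x y - u a b := by
  obtain ⟨d, hd, hd_min⟩ := (Γ.filter (u a b ≤ ·)).exists_min_image id
    ⟨U a b, Finset.mem_filter.2 ⟨hUΓ a b hab, (hu.2 a b hab).2⟩⟩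
  obtain ⟨hdΓ, hcd⟩ := Finset.mem_filter.1 hd
  have hd_le : ∀ γ ∈ Γ, u a b ≤ γ → d ≤ γ := fun γ hγ hcγ =>
    hd_min γ (Finset.mem_filter.2 ⟨hγ, hcγ⟩)
  have hLu : ∀ x y, x ≠ y → L x y ≤ u x y := fun x y hxy => (hu.2 x y hxy).1
  have hwab : mapOffDiag (snap Γ (u a b) d) u a b = d := by
    rw [mapOffDiag_of_ne _ _ hab, snap_self hcd (hLΓ a b hab) (hLu a b hab)]
  refine ⟨mapOffDiag (snap Γ (u a b) d) u,
    ⟨hu.1.mapOffDiag (snap_monotoneOn _ _) fun x y hxy => ⟨_, hLΓ x y hxy, hLu x y hxy⟩,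
      fun x y hxy => ?_⟩, fun x y => ?_, fun x y => ?_⟩
  · rw [mapOffDiag_of_ne _ _ hxy]
    exact ⟨le_snap (hLΓ x y hxy) (hLu x y hxy),
      snap_le hd_le (hLΓ x y hxy) (hLu x y hxy) (hUΓ x y hxy) (hu.2 x y hxy).2⟩
  · by_cases hxy : x = y
    · rw [hxy, mapOffDiag_self]
      exact h0
    · rw [mapOffDiag_of_ne _ _ hxy]
      exact snap_mem hdΓ (hLΓ x y hxy) (hLu x y hxy)
  · rw [hwab]
    by_cases hxy : x = y
    · rw [hxy, mapOffDiag_self, hu.1.1.1 y]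
      linarith
    · rw [mapOffDiag_of_ne _ _ hxy]
      exact snap_sub_le hcd (hLΓ x y hxy) (hLu x y hxy)

end Grid

theorem exists_finset_ultraBox_eq_tconv [Fintype X] [DecidableEq X] {L U : X → X → ℝ}
    (hU : IsUltra U) (hLU : ∀ x y, x ≠ y → L x y ≤ U x y) {p q : X} (hpq : p ≠ q)
    (hpin : L p q = U p q) :
    ∃ (V : Finset (X → X → ℝ)) (hV : V.Nonempty),
      (∀ v ∈ V, IsUltra v) ∧ ultraBox L U = tconv V hV := by
  set Γ : Finset ℝ := insert 0 (Finset.univ.image (fun z : X × X => L z.1 z.2) ∪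
    Finset.univ.image (fun z : X × X => U z.1 z.2))
  have hLΓ : ∀ x y, x ≠ y → L x y ∈ Γ := fun x y _ =>
    Finset.mem_insert_of_mem <| Finset.mem_union_left _ <|
      Finset.mem_image_of_mem _ (Finset.mem_univ (x, y))
  have hUΓ : ∀ x y, U x y ∈ Γ := fun x y =>
    Finset.mem_insert_of_mem <| Finset.mem_union_right _ <|
      Finset.mem_image_of_mem _ (Finset.mem_univ (x, y))
  have hfin : (ultraBox L U ∩ {w | ∀ x y, w x y ∈ Γ}).Finite :=
    (Set.finite_range fun f : X → X → Γ => fun x y => (f x y : ℝ)).subset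
      fun w hw => ⟨fun x y => ⟨w x y, hw.2 x y⟩, rfl⟩
  set V := hfin.toFinset
  have hV : V.Nonempty :=
    ⟨U, hfin.mem_toFinset.2 ⟨⟨hU, fun x y hxy => ⟨hLU x y hxy, le_rfl⟩⟩, hUΓ⟩⟩
  have hVbox : ∀ v ∈ V, v ∈ ultraBox L U := fun v hv => (hfin.mem_toFinset.1 hv).1
  have hpinned : ∀ u ∈ ultraBox L U, u p q = U p q := fun u hu =>
    le_antisymm (hu.2 p q hpq).2 (hpin ▸ (hu.2 p q hpq).1)
  refine ⟨V, hV, fun v hv => (hVbox v hv).1, Set.Subset.antisymm (fun u hu => ?_)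
    (tconv_subset_ultraBox hV hVbox)⟩
  have hwit : ∀ x y, x ≠ y → ∃ w ∈ V, ∀ x' y', w x' y' - w x y ≤ u x' y' - u x y := by
    intro x y hxy
    obtain ⟨w, hw, hwΓ, hslope⟩ :=
      exists_witness_mem_ultraBox hLΓ (fun x y _ => hUΓ x y) (hU.1.1 p ▸ hUΓ p p) hu hxy
    exact ⟨w, hfin.mem_toFinset.2 ⟨hw, hwΓ⟩, hslope⟩
  refine mem_tconv_of_witnesses hV (fun v hv => (hpinned v (hVbox v hv)).trans (hpinned u hu).symm)
    fun x y => ?_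
  by_cases hxy : x = y
  · obtain ⟨w, hw, hslope⟩ := hwit p q hpq
    refine ⟨w, hw, fun x' y' => ?_⟩
    have h := hslope x' y'
    rw [hpinned w (hVbox w hw), hpinned u hu] at h
    rw [hxy, (hVbox w hw).1.1.1 y, hu.1.1.1 y]
    linarith
  · exact hwit x y hxy

end

theorem stmt0_general {X : Type*} [Fintype X] (hcard : 2 ≤ Fintype.card X)
    (δ : X → X → ℝ) :
    ∃ (V : Finset (X → X → ℝ)) (hV : V.Nonempty),
      (∀ v ∈ V, IsUltra v) ∧
      {u | NearestUltra δ u} = tconv V hV ∧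
      {u | NearestUltra δ u}.Nonempty := by
  classical
  have : Nontrivial X := Fintype.one_lt_card_iff_nontrivial.1 hcard
  set G := subdominant δ
  set t := dinf δ G / 2 with ht
  have hGδ : ∀ x y, x ≠ y → G x y ≤ δ x y := fun x y => subdominant_le δ
  obtain ⟨p, q, hpq, hmax⟩ := exists_abs_sub_eq_dinf δ G
  rw [abs_of_nonneg (sub_nonneg.2 (hGδ p q hpq))] at hmax
  have hnear : {u | NearestUltra δ u} = ultraBox (fun x y => δ x y - t) (mapOffDiag (· + t) G) :=
    Set.ext fun u => nearestUltra_iff_mem_ultraBox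
  have hM : IsUltra (mapOffDiag (· + t) G) := (isUltra_subdominant δ).mapOffDiag_add t
  have hLM : ∀ x y, x ≠ y → δ x y - t ≤ mapOffDiag (· + t) G x y := fun x y hxy => by
    rw [mapOffDiag_of_ne _ _ hxy]
    linarith [abs_sub_le_dinf δ G hxy, le_abs_self (δ x y - G x y)]
  obtain ⟨V, hV, hVu, hbox⟩ := exists_finset_ultraBox_eq_tconv hM hLM hpq
    (by rw [mapOffDiag_of_ne _ _ hpq]; linarith)
  refine ⟨V, hV, hVu, hnear.trans hbox, hnear ▸ ⟨_, hM, fun x y hxy => ⟨hLM x y hxy, le_rfl⟩⟩⟩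

/-- The set of ultrametrics `l∞`-nearest to a dissimilarity map `δ` is the tropical
convex hull of a nonempty finite set of ultrametrics; in particular it is a nonempty
tropical polytope. -/
theorem stmt0 {X : Type*} [Fintype X] (hcard : 2 ≤ Fintype.card X)
    (δ : X → X → ℝ) (hδ : IsDissim δ) :
    ∃ (V : Finset (X → X → ℝ)) (hV : V.Nonempty),
      (∀ v ∈ V, IsUltra v) ∧
      {u | NearestUltra δ u} = tconv V hV ∧
      {u | NearestUltra δ u}.Nonempty :=
  stmt0_general hcard δ
end

section
/- Let M be a loopless matroid on a finite ground set, and let F and G be flats of M such that the restrictions M|F and M|G are connected matroids and F ∩ G ≠ ∅. Then the restriction of M to the closure of F ∪ G is a connected matroid. -/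
variable {α : Type*}

/-- A circuit of `M`: a dependent subset of the ground set all of whose proper
subsets are independent. -/
def MCircuit (M : Matroid α) (C : Set α) : Prop :=
  C ⊆ M.E ∧ ¬ M.Indep C ∧ ∀ D : Set α, D ⊂ C → M.Indep D

/-- A matroid is connected if its ground set is nonempty and any two distinct
elements of the ground set lie in a common circuit. -/
def MConnected (M : Matroid α) : Prop :=
  M.E.Nonempty ∧ ∀ a ∈ M.E, ∀ b ∈ M.E, a ≠ b → ∃ C, MCircuit M C ∧ a ∈ C ∧ b ∈ C

/-!
Sharing a circuit is a transitive relation (by strong circuit elimination, inducting on the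
number of elements of one circuit outside the other), so `M ↾ X` is connected as soon as every
element of `X` shares a circuit inside `X` with one fixed `p ∈ X`. Taking `p ∈ F ∩ G` gives
connectivity of `M ↾ (F ∪ G)`. An element `x ∈ cl(F ∪ G) \ (F ∪ G)` lies in a circuit inside
`insert x (F ∪ G)`; as the loops of `M` lie in the flat `F`, this circuit meets `F ∪ G`, and
transitivity links `x` to `p`.
-/

open Set

namespace Matroid

variable {M : Matroid α} {C C₁ C₂ X Y : Set α} {a b p : α}

theorem mCircuit_iff_isCircuit : MCircuit M C ↔ M.IsCircuit C := by
  rw [isCircuit_iff_forall_ssubset, Dep, MCircuit]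
  exact ⟨fun ⟨hCE, hC, hmin⟩ ↦ ⟨⟨hC, hCE⟩, fun I hI ↦ hmin I hI⟩,
    fun ⟨⟨hC, hCE⟩, hmin⟩ ↦ ⟨hCE, hC, fun I hI ↦ hmin hI⟩⟩

theorem mConnected_restrict_iff (hX : X ⊆ M.E) : MConnected (M ↾ X) ↔ X.Nonempty ∧
    ∀ a ∈ X, ∀ b ∈ X, a ≠ b → ∃ C ⊆ X, M.IsCircuit C ∧ a ∈ C ∧ b ∈ C := by
  simp only [MConnected, mCircuit_iff_isCircuit, restrict_isCircuit_iff hX, restrict_ground_eq]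
  grind

/-- The inductive step of Oxley's proof (Prop. 4.1.2): eliminate `p` from `C₂ ∪ C₁` keeping `b`,
then eliminate an element `k ∉ C₂` of the result from it and `C₁`, keeping `a`. -/
theorem IsCircuit.exists_mem_mem_or_exists_sdiff_ssubset (hC₁ : M.IsCircuit C₁)
    (hC₂ : M.IsCircuit C₂) (hp₁ : p ∈ C₁) (hp₂ : p ∈ C₂) (ha₁ : a ∈ C₁) (hb₂ : b ∈ C₂)
    (hb₁ : b ∉ C₁) :
    (∃ C ⊆ C₁ ∪ C₂, M.IsCircuit C ∧ a ∈ C ∧ b ∈ C) ∨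
      ∃ C ⊆ C₁ ∪ C₂, M.IsCircuit C ∧ a ∈ C ∧ (C ∩ C₂).Nonempty ∧ C \ C₂ ⊂ C₁ \ C₂ := by
  obtain ⟨C₃, hC₃ss, hC₃, hb₃⟩ := hC₂.strong_elimination hC₁ hp₂ hp₁ hb₂ hb₁
  by_cases ha₃ : a ∈ C₃
  · exact .inl ⟨C₃, hC₃ss.trans (sdiff_subset.trans (union_comm C₂ C₁).subset), hC₃, ha₃, hb₃⟩
  have hp₃ : p ∉ C₃ := fun h ↦ (hC₃ss h).2 rfl
  obtain ⟨k, hk₃, hk₂⟩ : ∃ k ∈ C₃, k ∉ C₂ := not_subset.1 fun h ↦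
    hp₃ (hC₃.eq_of_subset_isCircuit hC₂ h ▸ hp₂)
  have hC₃₁ : C₃ \ C₂ ⊆ C₁ := fun x hx ↦ ((hC₃ss hx.1).1).resolve_left hx.2
  have hk₁ : k ∈ C₁ := hC₃₁ ⟨hk₃, hk₂⟩
  obtain ⟨C, hCss, hC, haC⟩ := hC₁.strong_elimination hC₃ hk₁ hk₃ ha₁ ha₃
  have hCdiff : C \ C₂ ⊆ (C₁ \ C₂) \ {k} := fun x ⟨hxC, hx₂⟩ ↦
    ⟨⟨((hCss hxC).1).elim id fun hx₃ ↦ hC₃₁ ⟨hx₃, hx₂⟩, hx₂⟩, (hCss hxC).2⟩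
  refine .inr ⟨C, fun x hx ↦ ?_, hC, haC, ?_, ?_⟩
  · by_cases hx₂ : x ∈ C₂
    · exact .inr hx₂
    · exact .inl (hCdiff ⟨hx, hx₂⟩).1.1
  · refine not_disjoint_iff_nonempty_inter.1 fun hdisj ↦
      hC.not_indep ((hC₁.sdiff_singleton_indep hk₁).subset fun x hx ↦ ?_)
    obtain ⟨⟨hx₁, -⟩, hxk⟩ := hCdiff ⟨hx, hdisj.notMem_of_mem_left hx⟩
    exact ⟨hx₁, hxk⟩
  · exact (hCdiff.trans sdiff_subset).ssubset_of_ne fun h ↦ (hCdiff (h ▸ ⟨hk₁, hk₂⟩)).2 rfl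

theorem IsCircuit.exists_isCircuit_mem_mem (hC₁ : M.IsCircuit C₁) (hC₂ : M.IsCircuit C₂)
    (hfin : (C₁ \ C₂).Finite) (hne : (C₁ ∩ C₂).Nonempty) (ha : a ∈ C₁) (hb : b ∈ C₂) :
    ∃ C ⊆ C₁ ∪ C₂, M.IsCircuit C ∧ a ∈ C ∧ b ∈ C := by
  induction hn : (C₁ \ C₂).ncard using Nat.strong_induction_on generalizing C₁ with
  | _ n ih =>
  by_cases hb₁ : b ∈ C₁
  · exact ⟨C₁, subset_union_left, hC₁, ha, hb₁⟩
  obtain ⟨p, hp₁, hp₂⟩ := hne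
  obtain h | ⟨C, hCss, hC, haC, hCne, hClt⟩ :=
    hC₁.exists_mem_mem_or_exists_sdiff_ssubset hC₂ hp₁ hp₂ ha hb hb₁
  · exact h
  obtain ⟨C', hC'ss, hC'⟩ := ih _ (hn ▸ ncard_lt_ncard hClt hfin) hC (hfin.subset hClt.subset)
    hCne haC rfl
  exact ⟨C', hC'ss.trans (union_subset hCss subset_union_right), hC'⟩

theorem mConnected_restrict_of_forall_exists_isCircuit [M.Finitary] (hX : X ⊆ M.E) (hp : p ∈ X)
    (h : ∀ x ∈ X, x ≠ p → ∃ C ⊆ X, M.IsCircuit C ∧ x ∈ C ∧ p ∈ C) : MConnected (M ↾ X) := by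
  refine (mConnected_restrict_iff hX).2 ⟨⟨p, hp⟩, fun a ha b hb hab ↦ ?_⟩
  obtain rfl | hap := eq_or_ne a p
  · obtain ⟨C, hCX, hC, hbC, haC⟩ := h b hb hab.symm
    exact ⟨C, hCX, hC, haC, hbC⟩
  obtain rfl | hbp := eq_or_ne b p
  · exact h a ha hab
  obtain ⟨Ca, hCaX, hCa, haCa, hpCa⟩ := h a ha hap
  obtain ⟨Cb, hCbX, hCb, hbCb, hpCb⟩ := h b hb hbp
  obtain ⟨C, hCss, hC⟩ :=
    hCa.exists_isCircuit_mem_mem hCb hCa.finite.sdiff ⟨p, hpCa, hpCb⟩ haCa hbCb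
  exact ⟨C, hCss.trans (union_subset hCaX hCbX), hC⟩

theorem mConnected_restrict_union [M.Finitary] (hX : X ⊆ M.E) (hY : Y ⊆ M.E)
    (hXc : MConnected (M ↾ X)) (hYc : MConnected (M ↾ Y)) (hXY : (X ∩ Y).Nonempty) :
    MConnected (M ↾ (X ∪ Y)) := by
  obtain ⟨p, hpX, hpY⟩ := hXY
  refine mConnected_restrict_of_forall_exists_isCircuit (union_subset hX hY) (.inl hpX) ?_
  rintro x (hx | hx) hxp
  · obtain ⟨C, hCX, hC⟩ := ((mConnected_restrict_iff hX).1 hXc).2 x hx p hpX hxp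
    exact ⟨C, hCX.trans subset_union_left, hC⟩
  · obtain ⟨C, hCY, hC⟩ := ((mConnected_restrict_iff hY).1 hYc).2 x hx p hpY hxp
    exact ⟨C, hCY.trans subset_union_right, hC⟩

theorem mConnected_restrict_closure [M.Finitary] (hX : X ⊆ M.E) (hloops : M.loops ⊆ X)
    (hXc : MConnected (M ↾ X)) : MConnected (M ↾ M.closure X) := by
  obtain ⟨⟨p, hp⟩, hXc⟩ := (mConnected_restrict_iff hX).1 hXc
  have hXcl : X ⊆ M.closure X := M.subset_closure X hX
  refine mConnected_restrict_of_forall_exists_isCircuit (M.closure_subset_ground X) (hXcl hp) ?_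
  intro x hx hxp
  by_cases hxX : x ∈ X
  · obtain ⟨C, hCX, hC⟩ := hXc x hxX p hp hxp
    exact ⟨C, hCX.trans hXcl, hC⟩
  obtain ⟨C, hCss, hC, hxC⟩ := exists_isCircuit_of_mem_closure hx hxX
  have hCcl : C ⊆ M.closure X := hCss.trans (insert_subset hx hXcl)
  obtain ⟨y, hyC, hyx⟩ : ∃ y ∈ C, y ≠ x := by
    by_contra! h
    have hloop : M.IsLoop x := singleton_isCircuit.1 (eq_singleton_iff_unique_mem.2 ⟨hxC, h⟩ ▸ hC)
    exact hxX (hloops hloop)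
  have hyX : y ∈ X := (hCss hyC).resolve_left hyx
  obtain rfl | hyp := eq_or_ne y p
  · exact ⟨C, hCcl, hC, hxC, hyC⟩
  obtain ⟨D, hDX, hD, hyD, hpD⟩ := hXc y hyX p hp hyp
  obtain ⟨C', hC'ss, hC'⟩ := hC.exists_isCircuit_mem_mem hD hC.finite.sdiff ⟨y, hyC, hyD⟩ hxC hpD
  exact ⟨C', hC'ss.trans (union_subset hCcl (hDX.trans hXcl)), hC'⟩

end Matroid

theorem stmt4_general (M : Matroid α) (hfin : M.E.Finite)
    (F G : Set α) (hF : M.IsFlat F) (hG : M.IsFlat G)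
    (hFc : MConnected (M.restrict F)) (hGc : MConnected (M.restrict G))
    (hFG : (F ∩ G).Nonempty) :
    MConnected (M.restrict (M.closure (F ∪ G))) := by
  have : M.Finite := ⟨hfin⟩
  exact Matroid.mConnected_restrict_closure (union_subset hF.subset_ground hG.subset_ground)
    (hF.loops_subset.trans subset_union_left)
    (Matroid.mConnected_restrict_union hF.subset_ground hG.subset_ground hFc hGc hFG)

/-- If `F` and `G` are flats of a loopless matroid `M` (finite ground set) whose
restrictions are connected and `F ∩ G ≠ ∅`, then the restriction of `M` to the
closure of `F ∪ G` is connected. -/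
theorem stmt4 (M : Matroid α) (hfin : M.E.Finite) (hloop : ∀ e ∈ M.E, M.Indep {e})
    (F G : Set α) (hF : M.IsFlat F) (hG : M.IsFlat G)
    (hFc : MConnected (M.restrict F)) (hGc : MConnected (M.restrict G))
    (hFG : (F ∩ G).Nonempty) :
    MConnected (M.restrict (M.closure (F ∪ G))) :=
  stmt4_general M hfin F G hF hG hFc hGc hFG
end

section
/- Let M be a loopless matroid on a finite nonempty ground set E and let S be a nested set of M. Then for any F, G ∈ S, either F ⊆ G, or G ⊆ F, or F ∩ G = ∅. -/
variable {α : Type*}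

/-- The connected component of `e` in `M`: the equivalence class of `e` under the
relation "lying in a common circuit". -/
def MComponent (M : Matroid α) (e : α) : Set α :=
  {f ∈ M.E | f = e ∨ ∃ C, MCircuit M C ∧ e ∈ C ∧ f ∈ C}

/-- A nested set of `M`: a collection of nonempty connected flats containing every
connected component of `M`, such that the closure of the union of any ≥ 2 pairwise
incomparable members induces a disconnected restriction. -/
def NestedSet (M : Matroid α) (S : Set (Set α)) : Prop :=
  (∀ F ∈ S, F.Nonempty ∧ M.IsFlat F ∧ MConnected (M.restrict F)) ∧
  (∀ e ∈ M.E, MComponent M e ∈ S) ∧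
  (∀ T : Finset (Set α), ↑T ⊆ S → 2 ≤ T.card →
    (∀ F ∈ T, ∀ G ∈ T, F ≠ G → ¬ F ⊆ G ∧ ¬ G ⊆ F) →
    ¬ MConnected (M.restrict (M.closure (⋃ F ∈ T, F))))

/-!
If two members `F, G` of a nested set overlap without being nested, then `M ↾ (F ∪ G)` is
connected, since "lying in a common circuit" is transitive (strong circuit elimination) and
`F`, `G` are connected and share an element. Connectivity passes on to `M ↾ cl(F ∪ G)`:
an element `e` of `cl(F ∪ G) \ (F ∪ G)` lies in a circuit inside `insert e (F ∪ G)`, which meets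
`F ∪ G` because `e` is not a loop. This contradicts the nested set axiom for the pair `{F, G}`.
-/

open Set Matroid

variable {M : Matroid α} {C C₁ C₂ R X F G : Set α} {a b p : α}

lemma mcircuit_iff_isCircuit : MCircuit M C ↔ M.IsCircuit C := by
  rw [isCircuit_iff_forall_ssubset, Dep, MCircuit]
  exact ⟨fun ⟨hCE, hC, hmin⟩ ↦ ⟨⟨hC, hCE⟩, fun I hI ↦ hmin I hI⟩,
    fun ⟨⟨hC, hCE⟩, hmin⟩ ↦ ⟨hCE, hC, fun _ hD ↦ hmin hD⟩⟩

lemma mconnected_restrict_iff (hR : R ⊆ M.E) :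
    MConnected (M ↾ R) ↔
      R.Nonempty ∧ ∀ a ∈ R, ∀ b ∈ R, a ≠ b → ∃ C ⊆ R, M.IsCircuit C ∧ a ∈ C ∧ b ∈ C := by
  simp only [MConnected, mcircuit_iff_isCircuit, restrict_isCircuit_iff hR, restrict_ground_eq]
  exact and_congr_right fun _ ↦ by
    refine forall₄_congr fun _ _ _ _ ↦ imp_congr_right fun _ ↦ ?_
    exact ⟨fun ⟨C, ⟨hC, hCR⟩, ha, hb⟩ ↦ ⟨C, hCR, hC, ha, hb⟩,
      fun ⟨C, hCR, hC, ha, hb⟩ ↦ ⟨C, ⟨hC, hCR⟩, ha, hb⟩⟩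

lemma ncard_lt_of_subset_sdiff_singleton {X Y : Set α} {z : α} (hXY : X ⊆ Y \ {z}) (hz : z ∈ Y)
    (hY : Y.Finite) : X.ncard < Y.ncard :=
  ncard_lt_ncard
    ((ssubset_iff_of_subset (hXY.trans sdiff_subset)).2 ⟨z, hz, fun h ↦ (hXY h).2 rfl⟩) hY

/-- The transitivity step for "lying in a common circuit" (Oxley, Prop. 4.1.2), proved by
strong circuit elimination and induction on `(C₁ ∪ C₂).ncard`. -/
lemma Matroid.IsCircuit.exists_isCircuit_subset_union [M.Finitary] (hC₁ : M.IsCircuit C₁)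
    (hC₂ : M.IsCircuit C₂) (hC₁₂ : (C₁ ∩ C₂).Nonempty) (ha : a ∈ C₁) (hb : b ∈ C₂) :
    ∃ C ⊆ C₁ ∪ C₂, M.IsCircuit C ∧ a ∈ C ∧ b ∈ C := by
  induction h : (C₁ ∪ C₂).ncard using Nat.strong_induction_on generalizing C₁ C₂ with
  | _ n ih =>
  obtain ⟨f, hf₁, hf₂⟩ := hC₁₂
  by_cases hb₁ : b ∈ C₁
  · exact ⟨C₁, subset_union_left, hC₁, ha, hb₁⟩
  by_cases ha₂ : a ∈ C₂
  · exact ⟨C₂, subset_union_right, hC₂, ha₂, hb⟩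
  have hfin : (C₁ ∪ C₂).Finite := hC₁.finite.union hC₂.finite
  obtain ⟨C₃, hC₃s, hC₃, hb₃⟩ := hC₂.strong_elimination hC₁ hf₂ hf₁ hb hb₁
  obtain ⟨C₄, hC₄s, hC₄, ha₄⟩ := hC₁.strong_elimination hC₂ hf₁ hf₂ ha ha₂
  rw [union_comm] at hC₃s
  -- A circuit avoiding `f` is not contained in a circuit through `f`.
  obtain ⟨x, hx₃, hx₂⟩ :=
    not_subset.1 fun h ↦ (hC₃s (hC₃.eq_of_subset_isCircuit hC₂ h ▸ hf₂)).2 rfl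
  obtain ⟨y, hy₄, hy₁⟩ :=
    not_subset.1 fun h ↦ (hC₄s (hC₄.eq_of_subset_isCircuit hC₁ h ▸ hf₁)).2 rfl
  have hx₁ : x ∈ C₁ := ((hC₃s hx₃).1).resolve_right hx₂
  have hy₂ : y ∈ C₂ := ((hC₄s hy₄).1).resolve_left hy₁
  by_cases hy₃ : y ∈ C₃
  · have hs : C₄ ∪ C₃ ⊆ (C₁ ∪ C₂) \ {f} := union_subset hC₄s hC₃s
    obtain ⟨C, hC, h⟩ := ih _ (h ▸ ncard_lt_of_subset_sdiff_singleton hs (.inl hf₁) hfin)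
      hC₄ hC₃ ⟨y, hy₄, hy₃⟩ ha₄ hb₃ rfl
    exact ⟨C, hC.trans (hs.trans sdiff_subset), h⟩
  · have hs : C₁ ∪ C₃ ⊆ (C₁ ∪ C₂) \ {y} := union_subset
      (subset_sdiff_singleton subset_union_left hy₁)
      (subset_sdiff_singleton (hC₃s.trans sdiff_subset) hy₃)
    obtain ⟨C, hC, h⟩ := ih _ (h ▸ ncard_lt_of_subset_sdiff_singleton hs (.inr hy₂) hfin)
      hC₁ hC₃ ⟨x, hx₁, hx₃⟩ ha hb₃ rfl
    exact ⟨C, hC.trans (hs.trans sdiff_subset), h⟩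

lemma mconnected_restrict_of_forall_exists_isCircuit [M.Finitary] (hR : R ⊆ M.E) (hp : p ∈ R)
    (h : ∀ a ∈ R, a ≠ p → ∃ C ⊆ R, M.IsCircuit C ∧ a ∈ C ∧ p ∈ C) : MConnected (M ↾ R) := by
  refine (mconnected_restrict_iff hR).2 ⟨⟨p, hp⟩, fun a ha b hb hab ↦ ?_⟩
  obtain rfl | hap := eq_or_ne a p
  · obtain ⟨C, hCR, hC, hbC, haC⟩ := h b hb hab.symm
    exact ⟨C, hCR, hC, haC, hbC⟩
  obtain rfl | hbp := eq_or_ne b p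
  · exact h a ha hap
  obtain ⟨C₁, hC₁R, hC₁, ha₁, hp₁⟩ := h a ha hap
  obtain ⟨C₂, hC₂R, hC₂, hb₂, hp₂⟩ := h b hb hbp
  obtain ⟨C, hC, hC'⟩ := hC₁.exists_isCircuit_subset_union hC₂ ⟨p, hp₁, hp₂⟩ ha₁ hb₂
  exact ⟨C, hC.trans (union_subset hC₁R hC₂R), hC'⟩

lemma mconnected_restrict_union [M.Finitary] (hFE : F ⊆ M.E) (hGE : G ⊆ M.E)
    (hF : MConnected (M ↾ F)) (hG : MConnected (M ↾ G)) (hFG : (F ∩ G).Nonempty) :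
    MConnected (M ↾ (F ∪ G)) := by
  obtain ⟨p, hpF, hpG⟩ := hFG
  refine mconnected_restrict_of_forall_exists_isCircuit (union_subset hFE hGE) (.inl hpF) ?_
  rintro a (ha | ha) hap
  · obtain ⟨C, hCF, h⟩ := ((mconnected_restrict_iff hFE).1 hF).2 a ha p hpF hap
    exact ⟨C, hCF.trans subset_union_left, h⟩
  · obtain ⟨C, hCG, h⟩ := ((mconnected_restrict_iff hGE).1 hG).2 a ha p hpG hap
    exact ⟨C, hCG.trans subset_union_right, h⟩

lemma mconnected_restrict_closure [M.Finitary] [M.Loopless] (hXE : X ⊆ M.E)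
    (hX : MConnected (M ↾ X)) : MConnected (M ↾ M.closure X) := by
  obtain ⟨⟨p, hp⟩, hlink⟩ := (mconnected_restrict_iff hXE).1 hX
  have hXcl : X ⊆ M.closure X := M.subset_closure X
  refine mconnected_restrict_of_forall_exists_isCircuit (M.closure_subset_ground X)
    (hXcl hp) fun a ha hap ↦ ?_
  by_cases haX : a ∈ X
  · obtain ⟨C, hCX, h⟩ := hlink a haX p hp hap
    exact ⟨C, hCX.trans hXcl, h⟩
  obtain ⟨C, hCs, hC, haC⟩ := exists_isCircuit_of_mem_closure ha haX
  -- Since `a` is not a loop, its circuit meets `X`.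
  obtain ⟨x, hxC, hxa⟩ := (loopless_iff_forall_isCircuit.1 ‹_› C hC).exists_ne a
  have hCcl : C ⊆ M.closure X := hCs.trans (insert_subset ha hXcl)
  obtain rfl | hxp := eq_or_ne x p
  · exact ⟨C, hCcl, hC, haC, hxC⟩
  obtain ⟨C', hC'X, hC', hxC', hpC'⟩ := hlink x ((hCs hxC).resolve_left hxa) p hp hxp
  obtain ⟨D, hD, h⟩ := hC.exists_isCircuit_subset_union hC' ⟨x, hxC, hxC'⟩ haC hpC'
  exact ⟨D, hD.trans (union_subset hCcl (hC'X.trans hXcl)), h⟩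

lemma NestedSet.not_mconnected_restrict_closure_union {S : Set (Set α)} (hS : NestedSet M S)
    (hF : F ∈ S) (hG : G ∈ S) (hFG : ¬F ⊆ G) (hGF : ¬G ⊆ F) :
    ¬MConnected (M ↾ M.closure (F ∪ G)) := by
  classical
  have hne : F ≠ G := by rintro rfl; exact hFG subset_rfl
  have h := hS.2.2 {F, G} (by simp [insert_subset_iff, hF, hG]) (Finset.card_pair hne).ge
    (by simp [hFG, hGF])
  simpa using h

theorem stmt5_general (M : Matroid α) (hfin : M.E.Finite)
    (hloop : ∀ e ∈ M.E, M.Indep {e}) (S : Set (Set α)) (hS : NestedSet M S) :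
    ∀ F ∈ S, ∀ G ∈ S, F ⊆ G ∨ G ⊆ F ∨ F ∩ G = ∅ := by
  intro F hF G hG
  by_contra! ⟨hFG, hGF, hFG₀⟩
  have : M.Finite := ⟨hfin⟩
  have : M.Loopless := loopless_iff_forall_isNonloop.2 fun e he ↦ indep_singleton.1 (hloop e he)
  obtain ⟨-, hFflat, hFconn⟩ := hS.1 F hF
  obtain ⟨-, hGflat, hGconn⟩ := hS.1 G hG
  have hFE := hFflat.subset_ground
  have hGE := hGflat.subset_ground
  have hFGconn := mconnected_restrict_union hFE hGE hFconn hGconn hFG₀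
  exact hS.not_mconnected_restrict_closure_union hF hG hFG hGF <|
    mconnected_restrict_closure (union_subset hFE hGE) hFGconn

/-- Any two members of a nested set of a loopless matroid on a finite nonempty
ground set are nested or disjoint. -/
theorem stmt5 (M : Matroid α) (hfin : M.E.Finite) (hne : M.E.Nonempty)
    (hloop : ∀ e ∈ M.E, M.Indep {e}) (S : Set (Set α)) (hS : NestedSet M S) :
    ∀ F ∈ S, ∀ G ∈ S, F ⊆ G ∨ G ⊆ F ∨ F ∩ G = ∅ :=
  stmt5_general M hfin hloop S hS
end

section
/- Let M be a loopless matroid on a finite nonempty ground set E, let S be a nested set of M, and let α : S → ℝ be compatible with S. Then w^{S,α} is an M-ultrametric. -/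
variable {α : Type*}

/-- `a : S → ℝ` is compatible with `S`: weakly monotone with respect to inclusion. -/
def Compat (S : Set (Set α)) (a : Set α → ℝ) : Prop :=
  ∀ F ∈ S, ∀ G ∈ S, F ⊆ G → a F ≤ a G

/-- `a : S → ℝ` is strictly compatible with `S`. -/
def StrictCompat (S : Set (Set α)) (a : Set α → ℝ) : Prop :=
  ∀ F ∈ S, ∀ G ∈ S, F ⊂ G → a F < a G

/-- `F` is the minimal member of `S` containing `e`. -/
def MinMem (S : Set (Set α)) (e : α) (F : Set α) : Prop :=
  F ∈ S ∧ e ∈ F ∧ ∀ G ∈ S, e ∈ G → F ⊆ G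

/-- `w` is the vector `w^{S,a}`, i.e. `w e = a (F_e)` where `F_e` is the minimal
member of `S` containing `e`, for every `e` in the ground set. -/
def Represents (M : Matroid α) (S : Set (Set α)) (a : Set α → ℝ) (w : α → ℝ) : Prop :=
  ∀ e ∈ M.E, ∃ F, MinMem S e F ∧ w e = a F

/-- The weight of a set `B` with respect to `w`. -/
noncomputable def bweight (w : α → ℝ) (B : Set α) : ℝ := ∑ᶠ e ∈ B, w e

/-- `B` is a `w`-minimum basis of `M`. -/
def MinBase (M : Matroid α) (w : α → ℝ) (B : Set α) : Prop :=
  M.IsBase B ∧ ∀ B', M.IsBase B' → bweight w B ≤ bweight w B'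

/-- `w` is an `M`-ultrametric: every ground element lies in some `w`-minimum basis. -/
def MUltrametric (M : Matroid α) (w : α → ℝ) : Prop :=
  ∀ e ∈ M.E, ∃ B, MinBase M w B ∧ e ∈ B

/-!
Take a `w`-minimum basis `B` and `e ∉ B`. If the fundamental circuit `C` of `e` contains an element
`f ≠ e` with `w e ≤ w f`, then `B - f + e` is again a `w`-minimum basis, and it contains `e`.
Such an `f` exists: otherwise every `f ∈ C - e` is strictly lighter than `e`, so by compatibility
the minimal member `F_f` of `S` at `f` avoids `e`. The inclusion-maximal members of `S` that avoid
`e` and meet `C` then cover `C - e`, and they are all glued together by the circuit `C` inside the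
closure of their union. The nested-set axiom forces a single such member `G`, whence
`e ∈ cl (C - e) ⊆ cl G = G`, a contradiction.
-/

open Set Matroid

lemma mCircuit_iff_isCircuit {M : Matroid α} {C : Set α} : MCircuit M C ↔ M.IsCircuit C := by
  rw [isCircuit_iff_forall_ssubset, Dep, MCircuit]
  tauto

namespace Matroid

variable {M : Matroid α} {R C₁ C₂ : Set α} {x y z : α}

def ConnectedIn (M : Matroid α) (R : Set α) (x y : α) : Prop :=
  x = y ∨ ∃ C ⊆ R, M.IsCircuit C ∧ x ∈ C ∧ y ∈ C

lemma ConnectedIn.symm (h : M.ConnectedIn R x y) : M.ConnectedIn R y x := by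
  rcases h with rfl | ⟨C, hCR, hC, hx, hy⟩
  exacts [Or.inl rfl, Or.inr ⟨C, hCR, hC, hy, hx⟩]

lemma ConnectedIn.mono {R' : Set α} (h : M.ConnectedIn R x y) (hRR' : R ⊆ R') :
    M.ConnectedIn R' x y := by
  rcases h with rfl | ⟨C, hCR, hC, hx, hy⟩
  exacts [Or.inl rfl, Or.inr ⟨C, hCR.trans hRR', hC, hx, hy⟩]

/-- Induction on `|C₁ ∪ C₂|`: two strong circuit eliminations produce a pair of intersecting
circuits through `x` and `z` with a strictly smaller union. -/
lemma IsCircuit.exists_isCircuit_mem_mem_s6 [M.Finitary] (hC₁ : M.IsCircuit C₁)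
    (hC₂ : M.IsCircuit C₂) (hx : x ∈ C₁) (hz : z ∈ C₂) (hC₁₂ : (C₁ ∩ C₂).Nonempty) :
    ∃ C ⊆ C₁ ∪ C₂, M.IsCircuit C ∧ x ∈ C ∧ z ∈ C := by
  generalize hn : (C₁ ∪ C₂).ncard = n
  induction n using Nat.strong_induction_on generalizing C₁ C₂ with
  | _ n ih =>
  by_cases hxC₂ : x ∈ C₂
  · exact ⟨C₂, subset_union_right, hC₂, hxC₂, hz⟩
  obtain ⟨y, hyC₁, hyC₂⟩ := hC₁₂
  obtain ⟨C₃, hC₃U, hC₃, hxC₃⟩ := hC₁.strong_elimination hC₂ hyC₁ hyC₂ hx hxC₂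
  have hC₃U' : C₃ ⊆ C₁ ∪ C₂ := hC₃U.trans sdiff_subset
  by_cases hzC₃ : z ∈ C₃
  · exact ⟨C₃, hC₃U', hC₃, hxC₃, hzC₃⟩
  obtain ⟨g, hgC₃, hgC₁⟩ : ∃ g ∈ C₃, g ∉ C₁ := by
    by_contra! h
    exact (hC₃U (hC₃.eq_of_subset_isCircuit hC₁ h ▸ hyC₁)).2 rfl
  have hgC₂ : g ∈ C₂ := (hC₃U' hgC₃).resolve_left hgC₁
  obtain ⟨C₄, hC₄U, hC₄, hzC₄⟩ := hC₂.strong_elimination hC₃ hgC₂ hgC₃ hz hzC₃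
  have hC₄U' : C₄ ⊆ C₁ ∪ C₂ :=
    hC₄U.trans (sdiff_subset.trans (union_subset subset_union_right hC₃U'))
  have hgC₄ : g ∉ C₄ := fun h ↦ (hC₄U h).2 rfl
  have hfin : (C₁ ∪ C₂).Finite := hC₁.finite.union hC₂.finite
  by_cases hC₁₄ : (C₁ ∩ C₄).Nonempty
  · have hsub : C₁ ∪ C₄ ⊂ C₁ ∪ C₂ := (ssubset_iff_of_subset (union_subset subset_union_left
      hC₄U')).2 ⟨g, Or.inr hgC₂, by rintro (h | h); exacts [hgC₁ h, hgC₄ h]⟩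
    obtain ⟨C, hCU, hC⟩ := ih _ (hn ▸ ncard_lt_ncard hsub hfin) hC₁ hC₄ hx hzC₄ hC₁₄ rfl
    exact ⟨C, hCU.trans hsub.subset, hC⟩
  · have hC₃₄ : (C₃ ∩ C₄).Nonempty := by
      by_contra h
      have hC₄C₂ : C₄ ⊆ C₂ := fun u hu ↦ (hC₄U hu).1.resolve_right fun hu₃ ↦ h ⟨u, hu₃, hu⟩
      exact hgC₄ (hC₄.eq_of_subset_isCircuit hC₂ hC₄C₂ ▸ hgC₂)
    have hsub : C₃ ∪ C₄ ⊂ C₁ ∪ C₂ := (ssubset_iff_of_subset (union_subset hC₃U' hC₄U')).2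
      ⟨y, Or.inl hyC₁, by rintro (h | h); exacts [(hC₃U h).2 rfl, hC₁₄ ⟨y, hyC₁, h⟩]⟩
    obtain ⟨C, hCU, hC⟩ := ih _ (hn ▸ ncard_lt_ncard hsub hfin) hC₃ hC₄ hxC₃ hzC₄ hC₃₄ rfl
    exact ⟨C, hCU.trans hsub.subset, hC⟩

lemma ConnectedIn.trans [M.Finitary] (hxy : M.ConnectedIn R x y) (hyz : M.ConnectedIn R y z) :
    M.ConnectedIn R x z := by
  rcases hxy with rfl | ⟨C₁, hC₁R, hC₁, hxC₁, hyC₁⟩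
  · exact hyz
  rcases hyz with rfl | ⟨C₂, hC₂R, hC₂, hyC₂, hzC₂⟩
  · exact Or.inr ⟨C₁, hC₁R, hC₁, hxC₁, hyC₁⟩
  obtain ⟨C, hCU, hC⟩ := hC₁.exists_isCircuit_mem_mem_s6 hC₂ hxC₁ hzC₂ ⟨y, hyC₁, hyC₂⟩
  exact Or.inr ⟨C, hCU.trans (union_subset hC₁R hC₂R), hC⟩

lemma mConnected_restrict_iff_s6 (hR : R ⊆ M.E) :
    MConnected (M ↾ R) ↔ R.Nonempty ∧ ∀ x ∈ R, ∀ y ∈ R, M.ConnectedIn R x y := by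
  simp only [MConnected, restrict_ground_eq, mCircuit_iff_isCircuit, restrict_isCircuit_iff hR,
    ConnectedIn]
  refine and_congr_right fun _ ↦ forall₂_congr fun x _ ↦ forall₂_congr fun y _ ↦ ?_
  by_cases hxy : x = y
  · simp [hxy]
  · simp only [hxy, false_or, ne_eq, not_false_eq_true, forall_const]
    exact ⟨fun ⟨C, ⟨hC, hCR⟩, hxC, hyC⟩ ↦ ⟨C, hCR, hC, hxC, hyC⟩,
      fun ⟨C, hCR, hC, hxC, hyC⟩ ↦ ⟨C, ⟨hC, hCR⟩, hxC, hyC⟩⟩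

/-- A point of `cl U \ U` lies on a circuit with some other point, which is in `U` because
`M` has no loops. -/
lemma mConnected_restrict_closure_s6 [M.Finitary] [M.Loopless] {U : Set α} (hU : U ⊆ M.E) {h : α}
    (hh : h ∈ M.closure U) (hub : ∀ x ∈ U, M.ConnectedIn (M.closure U) x h) :
    MConnected (M ↾ M.closure U) := by
  have hub' : ∀ x ∈ M.closure U, M.ConnectedIn (M.closure U) x h := by
    intro x hx
    by_cases hxU : x ∈ U
    · exact hub x hxU
    obtain ⟨D, hDU, hD, hxD⟩ := exists_isCircuit_of_mem_closure hx hxU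
    obtain ⟨y, hyD, hyx⟩ := (loopless_iff_forall_isCircuit.1 ‹_› D hD).exists_ne x
    have hxy : M.ConnectedIn (M.closure U) x y :=
      Or.inr ⟨D, hDU.trans (insert_subset hx (M.subset_closure U hU)), hD, hxD, hyD⟩
    exact hxy.trans (hub y ((hDU hyD).resolve_left hyx))
  rw [mConnected_restrict_iff_s6 (M.closure_subset_ground U)]
  exact ⟨⟨h, hh⟩, fun x hx y hy ↦ (hub' x hx).trans (hub' y hy).symm⟩

end Matroid

namespace NestedSet

variable {M : Matroid α} {S : Set (Set α)} {F G : Set α} {e x : α}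

lemma isFlat (hS : NestedSet M S) (hF : F ∈ S) : M.IsFlat F :=
  (hS.1 F hF).2.1

lemma subset_ground (hS : NestedSet M S) (hF : F ∈ S) : F ⊆ M.E :=
  (hS.isFlat hF).subset_ground

lemma finite [M.Finite] (hS : NestedSet M S) : S.Finite :=
  M.ground_finite.finite_subsets.subset fun _ ↦ hS.subset_ground

lemma connectedIn_of_mem (hS : NestedSet M S) (hF : F ∈ S) {R : Set α} (hFR : F ⊆ R) {y : α}
    (hx : x ∈ F) (hy : y ∈ F) : M.ConnectedIn R x y :=
  (((mConnected_restrict_iff_s6 (hS.subset_ground hF)).1 (hS.1 F hF).2.2).2 x hx y hy).mono hFR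

lemma subsingleton_of_connectedIn [M.Finitary] [M.Loopless] (hS : NestedSet M S)
    {T : Set (Set α)} (hTS : T ⊆ S) (hT : T.Finite) (hanti : IsAntichain (· ⊆ ·) T) {h : α}
    (hh : h ∈ M.closure (⋃₀ T))
    (hconn : ∀ F ∈ T, ∃ x ∈ F, M.ConnectedIn (M.closure (⋃₀ T)) x h) : T.Subsingleton := by
  have hUE : ⋃₀ T ⊆ M.E := sUnion_subset fun F hF ↦ hS.subset_ground (hTS hF)
  by_contra hnt
  have hcard : 2 ≤ hT.toFinset.card :=
    Finset.one_lt_card_iff_nontrivial.2 (hT.toFinset_nontrivial.2 (not_subsingleton_iff.1 hnt))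
  refine hS.2.2 hT.toFinset (by simpa using hTS) hcard
    (fun F hF G hG hFG ↦ ⟨hanti (by simpa using hF) (by simpa using hG) hFG,
      hanti (by simpa using hG) (by simpa using hF) hFG.symm⟩) ?_
  rw [show (⋃ F ∈ hT.toFinset, F) = ⋃₀ T by simp [sUnion_eq_biUnion]]
  refine mConnected_restrict_closure_s6 hUE hh fun y ⟨F, hF, hyF⟩ ↦ ?_
  obtain ⟨x, hxF, hxh⟩ := hconn F hF
  exact (hS.connectedIn_of_mem (hTS hF)
    ((subset_sUnion_of_mem hF).trans (M.subset_closure _ hUE)) hyF hxF).trans hxh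

lemma subset_or_subset_of_mem [M.Finitary] [M.Loopless] (hS : NestedSet M S) (hF : F ∈ S)
    (hG : G ∈ S) (hxF : x ∈ F) (hxG : x ∈ G) : F ⊆ G ∨ G ⊆ F := by
  by_contra! hFG
  have hanti : IsAntichain (· ⊆ ·) {F, G} := by
    rintro A (rfl | rfl) B (rfl | rfl) hAB <;> simp_all
  have hsub := hS.subsingleton_of_connectedIn (pair_subset hF hG) (toFinite _) hanti
    (M.subset_closure _ (sUnion_subset fun A hA ↦ hS.subset_ground (pair_subset hF hG hA))
      ⟨F, mem_insert _ _, hxF⟩)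
    (fun A hA ↦ ⟨x, by rcases hA with rfl | rfl <;> assumption, Or.inl rfl⟩)
  exact hFG.1 (hsub (mem_insert _ _) (mem_insert_of_mem _ rfl)).subset

lemma exists_minMem [M.Finite] [M.Loopless] (hS : NestedSet M S) (he : e ∈ M.E) :
    ∃ F, MinMem S e F := by
  obtain ⟨F, ⟨hF, heF⟩, hmin⟩ := (hS.finite.sep (e ∈ ·)).exists_minimal
    ⟨MComponent M e, hS.2.1 e he, he, Or.inl rfl⟩
  exact ⟨F, hF, heF, fun G hG heG ↦
    (hS.subset_or_subset_of_mem hF hG heF heG).elim id (hmin ⟨hG, heG⟩)⟩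

lemma exists_weight_le_of_isCircuit [M.Finite] [M.Loopless] (hS : NestedSet M S)
    {a : Set α → ℝ} {w : α → ℝ} (ha : Compat S a) (hw : Represents M S a w) {C : Set α}
    (hC : M.IsCircuit C) (he : e ∈ C) : ∃ f ∈ C \ {e}, w e ≤ w f := by
  by_contra! hlt
  obtain ⟨Fe, hFe, hwe⟩ := hw e (hC.subset_ground he)
  have havoid : ∀ f ∈ C \ {e}, ∃ F ∈ S, f ∈ F ∧ e ∉ F := by
    intro f hf
    obtain ⟨F, hF, hwf⟩ := hw f (hC.subset_ground hf.1)
    refine ⟨F, hF.1, hF.2.1, fun heF ↦ (hlt f hf).not_ge ?_⟩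
    rw [hwe, hwf]
    exact ha _ hFe.1 _ hF.1 (hFe.2.2 F hF.1 heF)
  set T := {F | Maximal (· ∈ {F ∈ S | e ∉ F ∧ (F ∩ C).Nonempty}) F}
  have hTS : T ⊆ S := fun F hF ↦ hF.1.1
  have heT : e ∉ ⋃₀ T := fun ⟨F, hF, heF⟩ ↦ hF.1.2.1 heF
  have hCT : C \ {e} ⊆ ⋃₀ T := by
    intro f hf
    obtain ⟨F, hF, hfF, heF⟩ := havoid f hf
    obtain ⟨G, hFG, hG⟩ := (hS.finite.sep fun F ↦ e ∉ F ∧ (F ∩ C).Nonempty).exists_le_maximal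
      ⟨hF, heF, f, hfF, hf.1⟩
    exact ⟨G, hG, hFG hfF⟩
  have hCcl : C ⊆ M.closure (⋃₀ T) :=
    (hC.subset_closure_sdiff_singleton e).trans (M.closure_subset_closure hCT)
  have hsub : T.Subsingleton := hS.subsingleton_of_connectedIn hTS (hS.finite.subset hTS)
    (fun F hF G hG hFG hFG' ↦ hFG (hF.eq_of_le hG.1 hFG')) (hCcl he)
    (fun F hF ↦ by
      obtain ⟨x, hxF, hxC⟩ := hF.1.2.2
      exact ⟨x, hxF, Or.inr ⟨C, hCcl, hC, hxC, he⟩⟩)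
  have heT' := hCcl he
  rcases hsub.eq_empty_or_singleton with hT | ⟨G, hT⟩
  · rw [hT, sUnion_empty] at heT'
    exact M.not_isLoop e heT'
  · rw [hT, sUnion_singleton] at heT heT'
    rw [(hS.isFlat (hTS (hT ▸ rfl))).closure] at heT'
    exact heT heT'

end NestedSet

lemma bweight_insert_sdiff_add {w : α → ℝ} {B : Set α} (hB : B.Finite) {e f : α} (he : e ∉ B)
    (hf : f ∈ B) : bweight w (insert e B \ {f}) + w f = bweight w B + w e := by
  have hef : e ≠ f := ne_of_mem_of_not_mem hf he |>.symm
  have hsplit : bweight w B = w f + bweight w (B \ {f}) := by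
    rw [bweight, bweight, ← finsum_mem_insert w (fun h : f ∈ B \ {f} ↦ h.2 rfl) hB.sdiff,
      insert_sdiff_self_of_mem hf]
  rw [hsplit, bweight, bweight, ← insert_sdiff_singleton_comm hef,
    finsum_mem_insert _ (fun h ↦ he h.1) hB.sdiff]
  ring

lemma exists_minBase (M : Matroid α) [M.Finite] (w : α → ℝ) : ∃ B, MinBase M w B := by
  have hfin : {B | M.IsBase B}.Finite :=
    M.ground_finite.finite_subsets.subset fun _ hB ↦ hB.subset_ground
  obtain ⟨B, hB, hmin⟩ := exists_min_image _ (bweight w) hfin M.exists_isBase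
  exact ⟨B, hB, hmin⟩

lemma mUltrametric_of_forall_isCircuit {M : Matroid α} [M.Finite] {w : α → ℝ}
    (hw : ∀ C e, M.IsCircuit C → e ∈ C → ∃ f ∈ C \ {e}, w e ≤ w f) : MUltrametric M w := by
  intro e he
  obtain ⟨B, hB, hBmin⟩ := exists_minBase M w
  by_cases heB : e ∈ B
  · exact ⟨B, ⟨hB, hBmin⟩, heB⟩
  have hecl : e ∈ M.closure B := by rwa [hB.closure_eq]
  obtain ⟨f, ⟨hfC, hfe⟩, hwef⟩ :=
    hw _ e (hB.fundCircuit_isCircuit he heB) (M.mem_fundCircuit e B)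
  have hfB : f ∈ B := (M.fundCircuit_subset_insert e B hfC).resolve_left hfe
  have hexch := hB.exchange_isBase_of_indep' hfB heB ((hB.indep.mem_fundCircuit_iff hecl heB).1 hfC)
  have hweight := bweight_insert_sdiff_add (w := w) hB.finite heB hfB
  exact ⟨_, ⟨hexch, fun B' hB' ↦ by linarith [hBmin B' hB']⟩, mem_insert e B, fun h ↦ hfe h.symm⟩

theorem stmt6_general (M : Matroid α) (hfin : M.E.Finite)
    (hloop : ∀ e ∈ M.E, M.Indep {e}) (S : Set (Set α)) (hS : NestedSet M S)
    (a : Set α → ℝ) (ha : Compat S a) :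
    (∃ w : α → ℝ, Represents M S a w) ∧
      ∀ w : α → ℝ, Represents M S a w → MUltrametric M w := by
  classical
  have : M.Finite := ⟨hfin⟩
  have : M.Loopless := loopless_iff_forall_isNonloop.2 fun e he ↦ indep_singleton.1 (hloop e he)
  refine ⟨?_, fun w hw ↦ mUltrametric_of_forall_isCircuit fun C e hC he ↦
    hS.exists_weight_le_of_isCircuit ha hw hC he⟩
  choose F hF using fun e (he : e ∈ M.E) ↦ hS.exists_minMem he
  exact ⟨fun e ↦ if he : e ∈ M.E then a (F e he) else 0, fun e he ↦ ⟨F e he, hF e he, dif_pos he⟩⟩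

/-- If `S` is a nested set of a loopless matroid `M` on a finite nonempty ground set
and `a` is compatible with `S`, then the vector `w^{S,a}` exists and is an
`M`-ultrametric. -/
theorem stmt6 (M : Matroid α) (hfin : M.E.Finite) (hne : M.E.Nonempty)
    (hloop : ∀ e ∈ M.E, M.Indep {e}) (S : Set (Set α)) (hS : NestedSet M S)
    (a : Set α → ℝ) (ha : Compat S a) :
    (∃ w : α → ℝ, Represents M S a w) ∧
      ∀ w : α → ℝ, Represents M S a w → MUltrametric M w :=
  stmt6_general M hfin hloop S hS a ha
end

section
/- Let M be a loopless matroid on a finite nonempty ground set E and let S be a nested set of M. Then the set P_S = { w^{S,α} : α : S → ℝ strictly compatible with S } (the set of M-ultrametrics with topology S) is tropically convex: if α and β are strictly compatible with S and λ, μ ∈ ℝ satisfy max(λ,μ) = 0, then the vector e ↦ max(λ + w^{S,α}(e), μ + w^{S,β}(e)) equals w^{S,γ} for some strictly compatible γ : S → ℝ. -/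
variable {α : Type*}

/-! The minimal member `F_e` of `S` containing `e` depends on `S` alone, so `a ↦ w^{S,a}`
commutes with every coordinatewise operation; in particular the tropical combination of
`w^{S,a}` and `w^{S,b}` is `w^{S,g}` with `g = max (lam + a) (mu + b)`, and adding constants
and taking maxima preserve strict monotonicity. -/

theorem MinMem.unique {S : Set (Set α)} {e : α} {F G : Set α}
    (hF : MinMem S e F) (hG : MinMem S e G) : F = G :=
  (hF.2.2 G hG.1 hG.2.1).antisymm (hG.2.2 F hF.1 hF.2.1)

theorem Represents.map₂ {M : Matroid α} {S : Set (Set α)} {a b : Set α → ℝ} {u w : α → ℝ}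
    (hu : Represents M S a u) (hw : Represents M S b w) (f : ℝ → ℝ → ℝ) :
    Represents M S (fun F => f (a F) (b F)) (fun e => f (u e) (w e)) := by
  intro e he
  obtain ⟨F, hF, hue⟩ := hu e he
  obtain ⟨G, hG, hwe⟩ := hw e he
  obtain rfl := hF.unique hG
  exact ⟨F, hF, by simp only [hue, hwe]⟩

theorem StrictCompat.const_add {S : Set (Set α)} {a : Set α → ℝ}
    (ha : StrictCompat S a) (c : ℝ) : StrictCompat S (fun F => c + a F) :=
  fun F hF G hG hFG => add_lt_add_right (ha F hF G hG hFG) c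

theorem StrictCompat.max {S : Set (Set α)} {a b : Set α → ℝ}
    (ha : StrictCompat S a) (hb : StrictCompat S b) :
    StrictCompat S (fun F => max (a F) (b F)) :=
  fun F hF G hG hFG => max_lt_max (ha F hF G hG hFG) (hb F hF G hG hFG)

theorem stmt8_general (M : Matroid α) (S : Set (Set α))
    (a b : Set α → ℝ) (ha : StrictCompat S a) (hb : StrictCompat S b)
    (u w : α → ℝ) (hu : Represents M S a u) (hw : Represents M S b w)
    (lam mu : ℝ) :
    ∃ g : Set α → ℝ, StrictCompat S g ∧
      Represents M S g (fun e => max (lam + u e) (mu + w e)) :=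
  ⟨fun F => max (lam + a F) (mu + b F), (ha.const_add lam).max (hb.const_add mu),
    hu.map₂ hw fun x y => max (lam + x) (mu + y)⟩

/-- The set of `M`-ultrametrics with a given topology `S` is tropically convex: a
tropical convex combination of two vectors `w^{S,a}`, `w^{S,b}` with `a, b` strictly
compatible is again of the form `w^{S,g}` with `g` strictly compatible. -/
theorem stmt8 (M : Matroid α) (hfin : M.E.Finite) (hne : M.E.Nonempty)
    (hloop : ∀ e ∈ M.E, M.Indep {e}) (S : Set (Set α)) (hS : NestedSet M S)
    (a b : Set α → ℝ) (ha : StrictCompat S a) (hb : StrictCompat S b)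
    (u w : α → ℝ) (hu : Represents M S a u) (hw : Represents M S b w)
    (lam mu : ℝ) (hlm : max lam mu = 0) :
    ∃ g : Set α → ℝ, StrictCompat S g ∧
      Represents M S g (fun e => max (lam + u e) (mu + w e)) :=
  stmt8_general M S a b ha hb u w hu hw lam mu
end

section
/- Let n ≥ 2, let E be a set of 2-element subsets of [n] = {1,…,n}, let e₀ be a 2-element subset of [n] with e₀ ∉ E, and let x : E → ℝ be such that every edge of E lies in some x-minimum maximal acyclic subset of E. Then there exists t ∈ ℝ such that, defining x′ on E ∪ {e₀} by x′(e₀) = t and x′(e) = x(e) for e ∈ E, every edge of E ∪ {e₀} lies in some x′-minimum maximal acyclic subset of E ∪ {e₀}. -/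
/-- `F` is a maximal acyclic subset (spanning forest) of the edge set `E`. -/
def MaxAcyclicIn {n : ℕ} (E F : Finset (Sym2 (Fin n))) : Prop :=
  F ⊆ E ∧ (SimpleGraph.fromEdgeSet (↑F : Set (Sym2 (Fin n)))).IsAcyclic ∧
    ∀ F', F ⊆ F' → F' ⊆ E → (SimpleGraph.fromEdgeSet (↑F' : Set (Sym2 (Fin n)))).IsAcyclic →
      F' = F

/-- Every edge of `E` lies in some `x`-minimum maximal acyclic subset of `E`, i.e.
`x` is an ultrametric for the graphic matroid of `([n], E)`. -/
def GraphUltra {n : ℕ} (E : Finset (Sym2 (Fin n))) (x : Sym2 (Fin n) → ℝ) : Prop :=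
  ∀ e ∈ E, ∃ F : Finset (Sym2 (Fin n)), MaxAcyclicIn E F ∧
    (∀ F' : Finset (Sym2 (Fin n)), MaxAcyclicIn E F' →
      ∑ f ∈ F, x f ≤ ∑ f ∈ F', x f) ∧ e ∈ F

/-!
If the endpoints of `e₀` are not joined in `E`, then `e₀` is a coloop: the spanning forests of
`E ∪ {e₀}` are those of `E` with `e₀` added, and any weight `t` works. Otherwise fix an `x`-minimum
spanning forest `F₀` of `E` and let `t` be the largest weight on the `F₀`-path joining the
endpoints of `e₀`, attained at an edge `g`. Exchanging `g` for `e₀` gives a spanning forest of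
`E ∪ {e₀}` of weight `x(F₀)`, and no spanning forest of `E ∪ {e₀}` is lighter, since one containing
`e₀` can trade it for an edge of that path, of weight at most `t`. So the minimum weight does not
change, and the `x`-minimum spanning forests of `E` stay minimum.
-/

open SimpleGraph Finset

namespace SimpleGraph

variable {V : Type*} {G H K : SimpleGraph V} {a b c d u v : V}

theorem Reachable.of_forall_adj (h : ∀ a b, G.Adj a b → H.Reachable a b)
    (hab : G.Reachable a b) : H.Reachable a b := by
  simp only [reachable_eq_reflTransGen] at h hab ⊢
  exact Relation.reflTransGen_closed h _ _ hab

theorem edge_reachable (u v : V) : (edge u v).Reachable u v := by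
  by_cases huv : u = v
  · exact huv ▸ .rfl
  · exact Adj.reachable (by simp [edge_adj, huv])

theorem reachable_sup_edge_iff :
    (G ⊔ edge u v).Reachable a b ↔
      G.Reachable a b ∨ G.Reachable a u ∧ G.Reachable v b ∨ G.Reachable a v ∧ G.Reachable u b := by
  constructor
  · rintro ⟨p⟩
    induction p with
    | nil => exact .inl .rfl
    | cons h _ ih =>
      rw [sup_adj, edge_adj] at h
      rcases h with h | ⟨⟨rfl, rfl⟩ | ⟨rfl, rfl⟩, -⟩ <;>
        grind [Adj.reachable, Reachable.trans, Reachable.symm, Reachable.rfl]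
  · have huv : (G ⊔ edge u v).Reachable u v := (edge_reachable u v).mono le_sup_right
    have hle : G ≤ G ⊔ edge u v := le_sup_left
    rintro (h | ⟨h₁, h₂⟩ | ⟨h₁, h₂⟩)
    · exact h.mono hle
    · exact (h₁.mono hle).trans (huv.trans (h₂.mono hle))
    · exact (h₁.mono hle).trans (huv.symm.trans (h₂.mono hle))

theorem Reachable.of_sup_edge (hab : (H ⊔ edge c d).Reachable a b)
    (hH : ∀ a b, H.Adj a b → K.Reachable a b) (hcd : K.Reachable c d) : K.Reachable a b := by
  refine hab.of_forall_adj fun p q hpq => ?_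
  rw [sup_adj, edge_adj] at hpq
  rcases hpq with h | ⟨⟨rfl, rfl⟩ | ⟨rfl, rfl⟩, -⟩
  · exact hH p q h
  · exact hcd
  · exact hcd.symm

theorem Walk.exists_mem_edges_not_reachable (p : G.Walk u v) (h : ¬ H.Reachable u v) :
    ∃ a b, s(a, b) ∈ p.edges ∧ ¬ H.Reachable a b := by
  induction p with
  | nil => exact absurd .rfl h
  | @cons u w v _ p ih =>
    by_cases huw : H.Reachable u w
    · obtain ⟨a, b, hab, hnr⟩ := ih fun hwv => h (huw.trans hwv)
      exact ⟨a, b, by simp [hab], hnr⟩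
    · exact ⟨u, w, by simp, huw⟩

theorem Walk.mem_of_mem_edges_fromEdgeSet {s : Set (Sym2 V)} (p : (fromEdgeSet s).Walk u v)
    {e : Sym2 V} (he : e ∈ p.edges) : e ∈ s :=
  (edgeSet_fromEdgeSet s ▸ p.edges_subset_edgeSet he).1

variable [DecidableEq V]

theorem IsAcyclic.not_reachable_deleteEdges_of_mem_edges (hG : G.IsAcyclic)
    {p : G.Walk u v} (hp : p.IsPath) {e : Sym2 V} (he : e ∈ p.edges) :
    ¬ (G.deleteEdges {e}).Reachable u v := by
  obtain ⟨a, b⟩ := e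
  rw [reachable_deleteEdges_iff_exists_walk]
  rintro ⟨q, hq⟩
  have : q.toPath = ⟨p, hp⟩ := (hG.subsingleton_path u v).elim _ _
  exact hq (q.edges_toPath_subset_edges (congrArg Subtype.val this ▸ he))

theorem fromEdgeSet_insert (F : Finset (Sym2 V)) (a b : V) :
    fromEdgeSet ↑(insert s(a, b) F) = fromEdgeSet ↑F ⊔ edge a b := by
  rw [coe_insert, Set.insert_eq, fromEdgeSet_union, sup_comm]
  rfl

theorem fromEdgeSet_erase (F : Finset (Sym2 V)) (e : Sym2 V) :
    fromEdgeSet ↑(F.erase e) = (fromEdgeSet ↑F).deleteEdges {e} := by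
  rw [deleteEdges_fromEdgeSet, coe_erase]

theorem fromEdgeSet_eq_erase_sup_edge {F : Finset (Sym2 V)} (h : s(a, b) ∈ F) :
    fromEdgeSet ↑F = fromEdgeSet ↑(F.erase s(a, b)) ⊔ edge a b := by
  rw [← fromEdgeSet_insert, insert_erase h]

theorem IsAcyclic.not_reachable_erase {F : Finset (Sym2 V)}
    (hF : (fromEdgeSet (F : Set (Sym2 V))).IsAcyclic) (h : s(a, b) ∈ F) (hab : a ≠ b) :
    ¬ (fromEdgeSet ↑(F.erase s(a, b))).Reachable a b := by
  rw [fromEdgeSet_erase]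
  exact isAcyclic_iff_forall_adj_isBridge.mp hF (by simp [h, hab])

end SimpleGraph

namespace MaxAcyclicIn

variable {n : ℕ} {E E' F : Finset (Sym2 (Fin n))} {a b c d u v : Fin n}

theorem of_forall_reachable (hE : ∀ e ∈ E, ¬ e.IsDiag) (hFE : F ⊆ E)
    (hF : (fromEdgeSet (F : Set (Sym2 (Fin n)))).IsAcyclic)
    (h : ∀ a b, (fromEdgeSet (E : Set (Sym2 (Fin n)))).Adj a b →
      (fromEdgeSet (F : Set (Sym2 (Fin n)))).Reachable a b) :
    MaxAcyclicIn E F := by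
  refine ⟨hFE, hF, fun F' hFF' hF'E hF' => subset_antisymm (fun e he => ?_) hFF'⟩
  induction e using Sym2.ind with
  | _ a b =>
  by_contra heF
  have hab : a ≠ b := fun h => hE _ (hF'E he) (Sym2.mk_isDiag_iff.mpr h)
  refine hF'.not_reachable_erase he hab ((h a b ?_).mono (fromEdgeSet_mono ?_))
  · simp [hF'E he, hab]
  · exact coe_subset.mpr fun f hf => mem_erase.mpr ⟨fun h => heF (h ▸ hf), hFF' hf⟩

theorem reachable (hF : MaxAcyclicIn E F) (hab : (fromEdgeSet (E : Set (Sym2 (Fin n)))).Adj a b) :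
    (fromEdgeSet (F : Set (Sym2 (Fin n)))).Reachable a b := by
  rw [fromEdgeSet_adj] at hab
  by_contra hnr
  have hins := hF.2.2 (insert s(a, b) F) (subset_insert _ _) (insert_subset hab.1 hF.1)
    (by rw [fromEdgeSet_insert]; exact hF.2.1.sup_edge_of_not_reachable hnr)
  have hmem : s(a, b) ∈ F := hins ▸ mem_insert_self _ _
  exact hnr ((fromEdgeSet_adj _).mpr ⟨hmem, hab.2⟩).reachable

theorem reachable_iff (hF : MaxAcyclicIn E F) :
    (fromEdgeSet (F : Set (Sym2 (Fin n)))).Reachable a b ↔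
      (fromEdgeSet (E : Set (Sym2 (Fin n)))).Reachable a b :=
  ⟨fun h => h.mono (fromEdgeSet_mono (coe_subset.mpr hF.1)),
    fun h => h.of_forall_adj fun _ _ => hF.reachable⟩

theorem of_subset (hF : MaxAcyclicIn E' F) (hFE : F ⊆ E) (hEE' : E ⊆ E') : MaxAcyclicIn E F :=
  ⟨hFE, hF.2.1, fun F'' h₁ h₂ h₃ => hF.2.2 F'' h₁ (h₂.trans hEE') h₃⟩

theorem exchange (hE : ∀ e ∈ E, ¬ e.IsDiag) (hF : MaxAcyclicIn E F) (hcd : s(c, d) ∈ F)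
    (hab : s(a, b) ∈ E) (hnr : ¬ (fromEdgeSet ↑(F.erase s(c, d))).Reachable a b) :
    MaxAcyclicIn E (insert s(a, b) (F.erase s(c, d))) := by
  set H := fromEdgeSet (↑(F.erase s(c, d)) : Set (Sym2 (Fin n)))
  have hHF : H ≤ fromEdgeSet ↑F := fromEdgeSet_mono (coe_subset.mpr (erase_subset _ _))
  have hsplit := fromEdgeSet_eq_erase_sup_edge hcd
  have hne : a ≠ b := fun h => hE _ hab (Sym2.mk_isDiag_iff.mpr h)
  have hab' := hF.reachable ((fromEdgeSet_adj _).mpr ⟨hab, hne⟩)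
  rw [hsplit, reachable_sup_edge_iff] at hab'
  have hcd' : (H ⊔ edge a b).Reachable c d := by
    rw [reachable_sup_edge_iff]
    rcases hab' with h | ⟨hac, hdb⟩ | ⟨had, hcb⟩
    · exact absurd h hnr
    · exact .inr (.inl ⟨hac.symm, hdb.symm⟩)
    · exact .inr (.inr ⟨hcb, had⟩)
  refine of_forall_reachable hE (insert_subset hab ((erase_subset _ _).trans hF.1))
    ?_ fun p q hpq => ?_
  · rw [fromEdgeSet_insert]
    exact (hF.2.1.anti hHF).sup_edge_of_not_reachable hnr
  · have hpq' := hF.reachable hpq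
    rw [hsplit] at hpq'
    rw [fromEdgeSet_insert]
    exact hpq'.of_sup_edge (fun _ _ h => (le_sup_left (b := edge a b) h).reachable) hcd'

theorem insert_of_reachable (hE : ∀ e ∈ insert s(u, v) E, ¬ e.IsDiag) (hF : MaxAcyclicIn E F)
    (huv : (fromEdgeSet (E : Set (Sym2 (Fin n)))).Reachable u v) :
    MaxAcyclicIn (insert s(u, v) E) F := by
  refine of_forall_reachable hE (hF.1.trans (subset_insert _ _)) hF.2.1
    fun a b hab => ?_
  rw [fromEdgeSet_insert] at hab
  exact hab.reachable.of_sup_edge (fun _ _ => hF.reachable) (hF.reachable_iff.mpr huv)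

theorem insert_of_not_reachable (hE : ∀ e ∈ insert s(u, v) E, ¬ e.IsDiag)
    (hF : MaxAcyclicIn E F) (huv : ¬ (fromEdgeSet (E : Set (Sym2 (Fin n)))).Reachable u v) :
    MaxAcyclicIn (insert s(u, v) E) (insert s(u, v) F) := by
  refine of_forall_reachable hE (insert_subset_insert _ hF.1) ?_ fun a b hab => ?_
  · rw [fromEdgeSet_insert]
    exact hF.2.1.sup_edge_of_not_reachable (mt hF.reachable_iff.mp huv)
  · rw [fromEdgeSet_insert] at hab ⊢
    exact hab.reachable.of_sup_edge (fun _ _ h => (hF.reachable h).mono le_sup_left)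
      ((edge_reachable u v).mono le_sup_right)

theorem mem_of_not_reachable (hF : MaxAcyclicIn (insert s(u, v) E) F)
    (huv : ¬ (fromEdgeSet (E : Set (Sym2 (Fin n)))).Reachable u v) : s(u, v) ∈ F := by
  by_contra h
  have hne : u ≠ v := by rintro rfl; exact huv .rfl
  have hFE : F ⊆ E := (subset_insert_iff_of_notMem h).mp hF.1
  exact huv ((hF.reachable (by simp [hne])).mono (fromEdgeSet_mono (coe_subset.mpr hFE)))

theorem erase_of_not_reachable (hE : ∀ e ∈ E, ¬ e.IsDiag) (hF : MaxAcyclicIn (insert s(u, v) E) F)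
    (huv : ¬ (fromEdgeSet (E : Set (Sym2 (Fin n)))).Reachable u v) :
    MaxAcyclicIn E (F.erase s(u, v)) := by
  have hsub : F.erase s(u, v) ⊆ E := subset_insert_iff.mp hF.1
  have hle : fromEdgeSet (↑(F.erase s(u, v)) : Set (Sym2 (Fin n))) ≤ fromEdgeSet ↑E :=
    fromEdgeSet_mono (coe_subset.mpr hsub)
  refine of_forall_reachable hE hsub
    (hF.2.1.anti (fromEdgeSet_mono (coe_subset.mpr (erase_subset _ _)))) fun a b hab => ?_
  have hab' := hF.reachable (fromEdgeSet_mono (coe_subset.mpr (subset_insert _ _)) hab)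
  rw [fromEdgeSet_eq_erase_sup_edge (hF.mem_of_not_reachable huv), reachable_sup_edge_iff] at hab'
  rcases hab' with h | ⟨hau, hvb⟩ | ⟨hav, hub⟩
  · exact h
  · exact absurd (((hau.mono hle).symm.trans hab.reachable).trans (hvb.mono hle).symm) huv
  · exact absurd (((hub.mono hle).trans hab.reachable.symm).trans (hav.mono hle)) huv

end MaxAcyclicIn

def MinMaxAcyclicIn {n : ℕ} (E : Finset (Sym2 (Fin n))) (x : Sym2 (Fin n) → ℝ)
    (F : Finset (Sym2 (Fin n))) : Prop :=
  MaxAcyclicIn E F ∧ ∀ F', MaxAcyclicIn E F' → ∑ f ∈ F, x f ≤ ∑ f ∈ F', x f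

theorem exists_minMaxAcyclicIn {n : ℕ} (E : Finset (Sym2 (Fin n))) (x : Sym2 (Fin n) → ℝ) :
    ∃ F, MinMaxAcyclicIn E x F := by
  classical
  obtain ⟨F, hF⟩ := (E.powerset.filter fun F : Finset (Sym2 (Fin n)) =>
    (fromEdgeSet (F : Set (Sym2 (Fin n)))).IsAcyclic).exists_maximal ⟨∅, by simp⟩
  simp only [mem_filter, mem_powerset] at hF
  have hmax : MaxAcyclicIn E F :=
    ⟨hF.1.1, hF.1.2, fun F' hFF' hF'E hF' => (hF.2 ⟨hF'E, hF'⟩ hFF').antisymm hFF'⟩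
  obtain ⟨F₀, hF₀, hmin⟩ := (E.powerset.filter (MaxAcyclicIn E)).exists_min_image
    (fun F => ∑ f ∈ F, x f) ⟨F, by simp [hmax, hmax.1]⟩
  exact ⟨F₀, (mem_filter.mp hF₀).2, fun F' hF' => hmin F' (by simp [hF', hF'.1])⟩

namespace MinMaxAcyclicIn

variable {n : ℕ} {E F F₀ : Finset (Sym2 (Fin n))} {x : Sym2 (Fin n) → ℝ} {u v : Fin n} {t : ℝ}

theorem sum_le_sum_update (hE : ∀ e ∈ insert s(u, v) E, ¬ e.IsDiag) (hF₀ : MinMaxAcyclicIn E x F₀)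
    (p : (fromEdgeSet (F₀ : Set (Sym2 (Fin n)))).Walk u v) (ht : ∀ g ∈ p.edges, x g ≤ t)
    (hF : MaxAcyclicIn (insert s(u, v) E) F) :
    ∑ f ∈ F₀, x f ≤ ∑ f ∈ F, Function.update x s(u, v) t f := by
  by_cases he : s(u, v) ∉ F
  · rw [sum_update_of_notMem he]
    exact hF₀.2 F (hF.of_subset ((subset_insert_iff_of_notMem he).mp hF.1) (subset_insert _ _))
  rw [not_not] at he
  have huv : u ≠ v := fun h => hE _ (mem_insert_self _ _) (Sym2.mk_isDiag_iff.mpr h)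
  -- `u` and `v` are separated in `F - e₀`, so some edge of `p` crosses between the two sides
  obtain ⟨a, b, hab, hnr⟩ := p.exists_mem_edges_not_reachable (hF.2.1.not_reachable_erase he huv)
  have habE : s(a, b) ∈ E := hF₀.1.1 (p.mem_of_mem_edges_fromEdgeSet hab)
  have habF : s(a, b) ∉ F.erase s(u, v) := fun h =>
    hnr ((fromEdgeSet_adj _).mpr ⟨h, fun hab => hnr (hab ▸ .rfl)⟩).reachable
  have hF₁ : MaxAcyclicIn E (insert s(a, b) (F.erase s(u, v))) :=
    (hF.exchange hE he (mem_insert_of_mem habE) hnr).of_subset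
      (insert_subset habE (subset_insert_iff.mp hF.1)) (subset_insert _ _)
  calc ∑ f ∈ F₀, x f ≤ ∑ f ∈ insert s(a, b) (F.erase s(u, v)), x f := hF₀.2 _ hF₁
    _ = x s(a, b) + ∑ f ∈ F.erase s(u, v), x f := sum_insert habF
    _ ≤ t + ∑ f ∈ F.erase s(u, v), x f := by gcongr; exact ht _ hab
    _ = ∑ f ∈ F, Function.update x s(u, v) t f := by
      rw [sum_update_of_mem he, sdiff_singleton_eq_erase]

theorem insert_erase_of_mem_edges (hE : ∀ e ∈ insert s(u, v) E, ¬ e.IsDiag) (he₀ : s(u, v) ∉ E)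
    (hF₀ : MinMaxAcyclicIn E x F₀) {p : (fromEdgeSet (F₀ : Set (Sym2 (Fin n)))).Walk u v}
    (hp : p.IsPath) {g : Sym2 (Fin n)} (hg : g ∈ p.edges) (hgmax : ∀ g' ∈ p.edges, x g' ≤ x g) :
    MinMaxAcyclicIn (insert s(u, v) E) (Function.update x s(u, v) (x g))
      (insert s(u, v) (F₀.erase g)) := by
  have huv : (fromEdgeSet (E : Set (Sym2 (Fin n)))).Reachable u v := hF₀.1.reachable_iff.mp ⟨p⟩
  have hgF₀ : g ∈ F₀ := p.mem_of_mem_edges_fromEdgeSet hg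
  have he₀F₀ : s(u, v) ∉ F₀.erase g := fun h => he₀ (hF₀.1.1 (mem_of_mem_erase h))
  induction g using Sym2.ind with
  | _ c d =>
  refine ⟨(hF₀.1.insert_of_reachable hE huv).exchange hE hgF₀ (mem_insert_self _ _) ?_,
    fun F hF => ?_⟩
  · rw [fromEdgeSet_erase]
    exact hF₀.1.2.1.not_reachable_deleteEdges_of_mem_edges hp hg
  · rw [sum_insert he₀F₀, Function.update_self, sum_update_of_notMem he₀F₀,
      add_sum_erase _ _ hgF₀]
    exact hF₀.sum_le_sum_update hE p hgmax hF

end MinMaxAcyclicIn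

theorem graphUltra_iff {n : ℕ} {E : Finset (Sym2 (Fin n))} {x : Sym2 (Fin n) → ℝ} :
    GraphUltra E x ↔ ∀ e ∈ E, ∃ F, MinMaxAcyclicIn E x F ∧ e ∈ F := by
  simp only [GraphUltra, MinMaxAcyclicIn, and_assoc]

section InsertEdge

variable {n : ℕ} {E : Finset (Sym2 (Fin n))} {x : Sym2 (Fin n) → ℝ} {u v : Fin n}

theorem graphUltra_insert_of_not_reachable (hE : ∀ e ∈ insert s(u, v) E, ¬ e.IsDiag)
    (he₀ : s(u, v) ∉ E) (hx : GraphUltra E x)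
    (huv : ¬ (fromEdgeSet (E : Set (Sym2 (Fin n)))).Reachable u v) (t : ℝ) :
    GraphUltra (insert s(u, v) E) (Function.update x s(u, v) t) := by
  have hE₀ : ∀ e ∈ E, ¬ e.IsDiag := fun e he => hE e (mem_insert_of_mem he)
  have hsum : ∀ F ⊆ E, ∑ f ∈ insert s(u, v) F, Function.update x s(u, v) t f = t + ∑ f ∈ F, x f :=
    fun F hF => by
      have he₀F : s(u, v) ∉ F := fun h => he₀ (hF h)
      rw [sum_insert he₀F, Function.update_self, sum_update_of_notMem he₀F]
  have hins : ∀ F, MinMaxAcyclicIn E x F →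
      MinMaxAcyclicIn (insert s(u, v) E) (Function.update x s(u, v) t) (insert s(u, v) F) := by
    refine fun F hF => ⟨hF.1.insert_of_not_reachable hE huv, fun F' hF' => ?_⟩
    rw [← insert_erase (hF'.mem_of_not_reachable huv), hsum _ hF.1.1,
      hsum _ (subset_insert_iff.mp hF'.1)]
    exact (add_le_add_iff_left t).mpr (hF.2 _ (hF'.erase_of_not_reachable hE₀ huv))
  rw [graphUltra_iff] at hx ⊢
  intro e he
  rcases mem_insert.mp he with rfl | he
  · obtain ⟨F, hF⟩ := exists_minMaxAcyclicIn E x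
    exact ⟨_, hins F hF, mem_insert_self _ _⟩
  · obtain ⟨F, hF, heF⟩ := hx e he
    exact ⟨_, hins F hF, mem_insert_of_mem heF⟩

theorem exists_graphUltra_insert_of_reachable (hE : ∀ e ∈ insert s(u, v) E, ¬ e.IsDiag)
    (he₀ : s(u, v) ∉ E) (hx : GraphUltra E x)
    (huv : (fromEdgeSet (E : Set (Sym2 (Fin n)))).Reachable u v) :
    ∃ t, GraphUltra (insert s(u, v) E) (Function.update x s(u, v) t) := by
  have hne : u ≠ v := fun h => hE _ (mem_insert_self _ _) (Sym2.mk_isDiag_iff.mpr h)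
  obtain ⟨F₀, hF₀⟩ := exists_minMaxAcyclicIn E x
  obtain ⟨p₀⟩ := hF₀.1.reachable_iff.mpr huv
  obtain ⟨p, hp⟩ := p₀.toPath
  obtain ⟨g, hg, hgmax⟩ := p.edges.toFinset.exists_max_image x
    ((List.toFinset_nonempty_iff _).mpr (Walk.edges_eq_nil.not.mpr (Walk.not_nil_of_ne hne)))
  simp only [List.mem_toFinset] at hg hgmax
  refine ⟨x g, graphUltra_iff.mpr fun e he => ?_⟩
  rcases mem_insert.mp he with rfl | he
  · exact ⟨_, hF₀.insert_erase_of_mem_edges hE he₀ hp hg hgmax, mem_insert_self _ _⟩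
  · obtain ⟨F, hF, heF⟩ := graphUltra_iff.mp hx e he
    refine ⟨F, ⟨hF.1.insert_of_reachable hE huv, fun F' hF' => ?_⟩, heF⟩
    rw [sum_update_of_notMem fun h => he₀ (hF.1.1 h)]
    exact (hF.2 F₀ hF₀.1).trans (hF₀.sum_le_sum_update hE p hgmax hF')

end InsertEdge

theorem stmt19_general (n : ℕ) (E : Finset (Sym2 (Fin n)))
    (hEd : ∀ e ∈ E, ¬ e.IsDiag) (e₀ : Sym2 (Fin n)) (he₀d : ¬ e₀.IsDiag)
    (he₀ : e₀ ∉ E) (x : Sym2 (Fin n) → ℝ) (hx : GraphUltra E x) :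
    ∃ t : ℝ, GraphUltra (insert e₀ E) (fun e => if e = e₀ then t else x e) := by
  induction e₀ using Sym2.ind with
  | _ u v =>
  have hE : ∀ e ∈ insert s(u, v) E, ¬ e.IsDiag := (forall_mem_insert _ _ _).mpr ⟨he₀d, hEd⟩
  have hupdate (t : ℝ) : Function.update x s(u, v) t = fun e => if e = s(u, v) then t else x e :=
    funext fun e => Function.update_apply x s(u, v) t e
  simp only [← hupdate]
  by_cases huv : (fromEdgeSet (E : Set (Sym2 (Fin n)))).Reachable u v
  · exact exists_graphUltra_insert_of_reachable hE he₀ hx huv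
  · exact ⟨0, graphUltra_insert_of_not_reachable hE he₀ hx huv 0⟩

/-- If `x : E → ℝ` is an `M(G)`-ultrametric (every edge lies in some `x`-minimum
spanning forest of `E`) and `e₀ ∉ E` is another 2-element subset of `[n]`, then the
weight of `e₀` can be chosen so that the extension is an ultrametric for the graphic
matroid of `([n], E ∪ {e₀})`. -/
theorem stmt19 (n : ℕ) (hn : 2 ≤ n) (E : Finset (Sym2 (Fin n)))
    (hEd : ∀ e ∈ E, ¬ e.IsDiag) (e₀ : Sym2 (Fin n)) (he₀d : ¬ e₀.IsDiag)
    (he₀ : e₀ ∉ E) (x : Sym2 (Fin n) → ℝ) (hx : GraphUltra E x) :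
    ∃ t : ℝ, GraphUltra (insert e₀ E) (fun e => if e = e₀ then t else x e) :=
  stmt19_general n E hEd e₀ he₀d he₀ x hx
end
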